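/- arXiv:1109.0967 — 11 statements merged into one kernel-verified Lean document; each statement's English description precedes it below -/
import Mathlib

section
/- Strict monotonicity of the eigenvalue under a nonnegative nontrivial perturbation: if in addition β ≥ 0 on ℝ, β(x₀) > 0 for some x₀, and u(x,0) ≠ 0 for every x ∈ ℝ, then λ'(0) > 0. -/
open MeasureTheory Real Filter
open Topology

lemma aux_one_le_sq (x : ℝ) : (1:ℝ) ≤ (1 + |x|) ^ 2 := by
  nlinarith [abs_nonneg x]

lemma aux_integrable {f : ℝ → ℝ} {C : ℝ} (hf : Continuous f)
    (hbd : ∀ x, |f x| ≤ C / (1 + |x|) ^ 2) : Integrable f := by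
  have hC : 0 ≤ C := by
    have := (abs_nonneg (f 0)).trans (hbd 0)
    simpa using this
  have hg : Integrable (fun x : ℝ => C * (1 + x ^ 2)⁻¹) :=
    integrable_inv_one_add_sq.const_mul C
  refine hg.mono' hf.aestronglyMeasurable ?_
  filter_upwards with x
  have h2 : 1 + x ^ 2 ≤ (1 + |x|) ^ 2 := by nlinarith [abs_nonneg x, sq_abs x]
  have h3 : (0:ℝ) < 1 + x ^ 2 := by positivity
  calc ‖f x‖ = |f x| := rfl
    _ ≤ C / (1 + |x|) ^ 2 := hbd x
    _ ≤ C / (1 + x ^ 2) := by gcongr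
    _ = C * (1 + x ^ 2)⁻¹ := by rw [div_eq_mul_inv]

lemma aux_decay_cont {C : ℝ} : Continuous (fun x : ℝ => C / (1 + |x|) ^ 2) := by
  apply continuous_const.div (by continuity)
  intro x
  positivity

lemma aux_bound_integrable {C : ℝ} (hC : 0 ≤ C) :
    Integrable (fun x : ℝ => C / (1 + |x|) ^ 2) := by
  refine aux_integrable aux_decay_cont fun x => le_of_eq (abs_of_nonneg ?_)
  positivity

lemma aux_tendsto_sq_atTop : Tendsto (fun x : ℝ => (1 + |x|) ^ 2) atTop atTop :=
  (tendsto_pow_atTop two_ne_zero).comp (tendsto_atTop_add_const_left _ 1 tendsto_abs_atTop_atTop)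

lemma aux_tendsto_sq_atBot : Tendsto (fun x : ℝ => (1 + |x|) ^ 2) atBot atTop :=
  (tendsto_pow_atTop two_ne_zero).comp (tendsto_atTop_add_const_left _ 1 tendsto_abs_atBot_atTop)

lemma aux_tendsto_zero {W : ℝ → ℝ} {C : ℝ} (hbd : ∀ x, |W x| ≤ C / (1 + |x|) ^ 2) :
    Tendsto W atTop (𝓝 0) ∧ Tendsto W atBot (𝓝 0) :=
  ⟨squeeze_zero_norm hbd (tendsto_const_nhds.div_atTop aux_tendsto_sq_atTop),
   squeeze_zero_norm hbd (tendsto_const_nhds.div_atTop aux_tendsto_sq_atBot)⟩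

/-- Strict monotonicity of the eigenvalue under a nonnegative nontrivial perturbation. -/
theorem eigenvalue_strict_monotone_perturbation
    (h : ℝ) (hh : 0 < h)
    (V : ℝ → ℝ) (hV : Continuous V)
    (β : ℝ → ℝ) (hβ : ContDiff ℝ (⊤ : ℕ∞) β) (hβsupp : HasCompactSupport β)
    (u : ℝ → ℝ → ℝ) (hu : ContDiff ℝ (⊤ : ℕ∞) (fun p : ℝ × ℝ => u p.1 p.2))
    (lam : ℝ → ℝ) (hlam : Differentiable ℝ lam)
    (heig : ∀ ε x, -h ^ 2 * deriv (deriv (fun y => u y ε)) x + (V x + ε * β x) * u x ε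
      = lam ε * u x ε)
    (hnorm : ∀ ε, (∫ x, (u x ε) ^ 2) = 1)
    (hdecay : ∀ N : ℕ, ∀ j ≤ 2, ∀ k ≤ 1, ∀ K : Set ℝ, IsCompact K →
      ∃ C : ℝ, ∀ x : ℝ, ∀ ε ∈ K,
        |iteratedDeriv j (fun y => iteratedDeriv k (fun e => u y e) ε) x|
          ≤ C / (1 + |x|) ^ N)
    (hVgrowth : ∃ M : ℕ, ∃ C : ℝ, ∀ x, |V x| ≤ C * (1 + |x|) ^ M)
    (hβnonneg : ∀ x, 0 ≤ β x) (x₀ : ℝ) (hβpos : 0 < β x₀)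
    (hune : ∀ x, u x 0 ≠ 0) :
    0 < deriv lam 0 := by
  -- smoothness in x for fixed ε
  have hup : ∀ ε : ℝ, ContDiff ℝ (⊤ : ℕ∞) (fun x => u x ε) := fun ε =>
    hu.comp (contDiff_id.prodMk contDiff_const)
  have huc : ∀ ε, Continuous (fun x : ℝ => u x ε) := fun ε => (hup ε).continuous
  have hup' : ∀ ε : ℝ, ContDiff ℝ ((⊤:ℕ∞):WithTop ℕ∞) (fun x => u x ε) := fun ε =>
    (hup ε).of_le (by simp)
  have hde : ∀ ε : ℝ, Differentiable ℝ (deriv (fun x => u x ε)) := fun ε =>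
    ((contDiff_infty_iff_deriv.mp (hup' ε)).2).differentiable (by simp)
  -- bound on β
  obtain ⟨Cβ, hCβ⟩ : ∃ Cβ : ℝ, ∀ x, |β x| ≤ Cβ := by
    obtain ⟨C, hC⟩ := hβsupp.exists_bound_of_continuous hβ.continuous
    exact ⟨C, fun x => hC x⟩
  have hCβnn : 0 ≤ Cβ := le_trans (abs_nonneg _) (hCβ 0)
  -- decay constants on K = [-1,1]
  set K : Set ℝ := Set.Icc (-1 : ℝ) 1 with hKdef
  have h0K : (0:ℝ) ∈ K := by constructor <;> norm_num
  obtain ⟨C0, hC0⟩ := hdecay 2 0 (by norm_num) 0 (by norm_num) K isCompact_Icc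
  obtain ⟨C1, hC1⟩ := hdecay 2 1 (by norm_num) 0 (by norm_num) K isCompact_Icc
  simp only [iteratedDeriv_zero, iteratedDeriv_one] at hC0 hC1
  have hC0nn : 0 ≤ C0 := by
    have := (abs_nonneg (u 0 0)).trans (hC0 0 0 h0K)
    simpa using this
  have hC1nn : 0 ≤ C1 := by
    have := (abs_nonneg _).trans (hC1 0 0 h0K)
    simpa using this
  -- coarse bounds
  have hcoarse : ∀ x, ∀ ε ∈ K, |u x ε| ≤ C0 := fun x ε hε =>
    (hC0 x ε hε).trans (div_le_self hC0nn (aux_one_le_sq x))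
  have hprod : ∀ ε ∈ K, ∀ x, |u x ε * u x 0| ≤ C0 * C0 / (1 + |x|) ^ 2 := by
    intro ε hε x
    rw [abs_mul]
    calc |u x ε| * |u x 0| ≤ (C0 / (1 + |x|) ^ 2) * C0 :=
          mul_le_mul (hC0 x ε hε) (hcoarse x 0 h0K) (abs_nonneg _) (by positivity)
      _ = C0 * C0 / (1 + |x|) ^ 2 := by ring
  have hprodβ : ∀ ε ∈ K, ∀ x, |β x * (u x ε * u x 0)| ≤ Cβ * (C0 * C0) / (1 + |x|) ^ 2 := by
    intro ε hε x
    rw [abs_mul]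
    calc |β x| * |u x ε * u x 0| ≤ Cβ * (C0 * C0 / (1 + |x|) ^ 2) :=
          mul_le_mul (hCβ x) (hprod ε hε x) (abs_nonneg _) hCβnn
      _ = Cβ * (C0 * C0) / (1 + |x|) ^ 2 := by ring
  -- integrability
  have hGint : ∀ ε ∈ K, Integrable (fun x => u x ε * u x 0) := fun ε hε =>
    aux_integrable ((huc ε).mul (huc 0)) (hprod ε hε)
  have hFint : ∀ ε ∈ K, Integrable (fun x => β x * (u x ε * u x 0)) := fun ε hε =>
    aux_integrable (hβ.continuous.mul ((huc ε).mul (huc 0))) (hprodβ ε hε)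
  set F : ℝ → ℝ := fun ε => ∫ x, β x * (u x ε * u x 0) with hFdef
  set G : ℝ → ℝ := fun ε => ∫ x, u x ε * u x 0 with hGdef
  have hh2 : (h:ℝ) ^ 2 ≠ 0 := by positivity
  -- the key Wronskian identity
  have hkey : ∀ ε ∈ K, ε * F ε = (lam ε - lam 0) * G ε := by
    intro ε hε
    set W : ℝ → ℝ := fun x =>
      deriv (fun y => u y ε) x * u x 0 - deriv (fun y => u y 0) x * u x ε with hWdef
    set W' : ℝ → ℝ := fun x =>
      (1 / h ^ 2) * ((ε * β x - (lam ε - lam 0)) * (u x ε * u x 0)) with hW'def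
    have hderivW : ∀ x, HasDerivAt W (W' x) x := by
      intro x
      have hdε : HasDerivAt (fun y => u y ε) (deriv (fun y => u y ε) x) x :=
        (((hup ε).differentiable (by simp)) x).hasDerivAt
      have hd0 : HasDerivAt (fun y => u y 0) (deriv (fun y => u y 0) x) x :=
        (((hup 0).differentiable (by simp)) x).hasDerivAt
      have hddε : HasDerivAt (deriv (fun y => u y ε))
          (deriv (deriv (fun y => u y ε)) x) x :=
        ((hde ε) x).hasDerivAt
      have hdd0 : HasDerivAt (deriv (fun y => u y 0))
          (deriv (deriv (fun y => u y 0)) x) x :=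
        ((hde 0) x).hasDerivAt
      have H := (hddε.mul hd0).sub (hdd0.mul hdε)
      have e1 : deriv (deriv (fun y => u y ε)) x
          = (1 / h ^ 2) * ((V x + ε * β x - lam ε) * u x ε) := by
        have hx := heig ε x
        field_simp
        linarith
      have e2 : deriv (deriv (fun y => u y 0)) x
          = (1 / h ^ 2) * ((V x + 0 * β x - lam 0) * u x 0) := by
        have hx := heig 0 x
        field_simp
        linarith
      refine H.congr_deriv ?_
      rw [e1, e2]
      ring
    have hintW' : Integrable W' := by
      refine aux_integrable
        (continuous_const.mul (((continuous_const.mul hβ.continuous).sub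
          continuous_const).mul ((huc ε).mul (huc 0))))
        (C := (1 / h ^ 2) * ((|ε| * Cβ + |lam ε - lam 0|) * (C0 * C0))) ?_
      intro x
      have hb1 : |ε * β x - (lam ε - lam 0)| ≤ |ε| * Cβ + |lam ε - lam 0| := by
        calc |ε * β x - (lam ε - lam 0)| ≤ |ε * β x| + |lam ε - lam 0| := abs_sub _ _
          _ ≤ |ε| * Cβ + |lam ε - lam 0| := by
              rw [abs_mul]
              have := mul_le_mul_of_nonneg_left (hCβ x) (abs_nonneg ε)
              linarith
      calc |W' x| = (1 / h ^ 2) * (|ε * β x - (lam ε - lam 0)| * |u x ε * u x 0|) := by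
            rw [hW'def]
            simp only [abs_mul]
            rw [abs_of_pos (by positivity : (0:ℝ) < 1 / h ^ 2)]
        _ ≤ (1 / h ^ 2) * ((|ε| * Cβ + |lam ε - lam 0|) * (C0 * C0 / (1 + |x|) ^ 2)) := by
            have h2 := hprod ε hε x
            gcongr
        _ = (1 / h ^ 2) * ((|ε| * Cβ + |lam ε - lam 0|) * (C0 * C0)) / (1 + |x|) ^ 2 := by
            ring
    have hWbd : ∀ x, |W x| ≤ (C1 * C0 + C1 * C0) / (1 + |x|) ^ 2 := by
      intro x
      calc |W x| ≤ |deriv (fun y => u y ε) x * u x 0| + |deriv (fun y => u y 0) x * u x ε| :=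
            abs_sub _ _
        _ ≤ (C1 / (1 + |x|) ^ 2) * C0 + (C1 / (1 + |x|) ^ 2) * C0 := by
            rw [abs_mul, abs_mul]
            have b1 := mul_le_mul (hC1 x ε hε) (hcoarse x 0 h0K) (abs_nonneg _)
              (by positivity)
            have b2 := mul_le_mul (hC1 x 0 h0K) (hcoarse x ε hε) (abs_nonneg _)
              (by positivity)
            linarith
        _ = (C1 * C0 + C1 * C0) / (1 + |x|) ^ 2 := by ring
    obtain ⟨htop, hbot⟩ := aux_tendsto_zero hWbd
    have hint0 : ∫ x, W' x = 0 := by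
      rw [integral_of_hasDerivAt_of_tendsto hderivW hintW' hbot htop]
      ring
    have hint1 : ∫ x, (ε * β x - (lam ε - lam 0)) * (u x ε * u x 0) = 0 := by
      have hW'eq : ∫ x, W' x
          = (1 / h ^ 2) * ∫ x, (ε * β x - (lam ε - lam 0)) * (u x ε * u x 0) := by
        rw [hW'def]
        exact integral_const_mul _ _
      rw [hW'eq] at hint0
      have : (1 / h ^ 2 : ℝ) ≠ 0 := by positivity
      exact (mul_eq_zero.mp hint0).resolve_left this
    have hsplit : (fun x => (ε * β x - (lam ε - lam 0)) * (u x ε * u x 0))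
        = fun x => ε * (β x * (u x ε * u x 0)) - (lam ε - lam 0) * (u x ε * u x 0) := by
      funext x; ring
    rw [hsplit, integral_sub ((hFint ε hε).const_mul ε) ((hGint ε hε).const_mul _),
      integral_const_mul, integral_const_mul] at hint1
    simp only [hFdef, hGdef]
    linarith
  -- continuity of F and G at 0
  have hKmem : K ∈ 𝓝 (0:ℝ) := Icc_mem_nhds (by norm_num) (by norm_num)
  have huεcont : ∀ x : ℝ, Continuous (fun ε => u x ε) := fun x =>
    hu.continuous.comp (continuous_const.prodMk continuous_id)
  have hGt : Tendsto G (𝓝 0) (𝓝 (G 0)) := by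
    refine tendsto_integral_filter_of_dominated_convergence
      (fun x => C0 * C0 / (1 + |x|) ^ 2) ?_ ?_ (aux_bound_integrable (by positivity)) ?_
    · filter_upwards with ε using ((huc ε).mul (huc 0)).aestronglyMeasurable
    · filter_upwards [hKmem] with ε hε
      filter_upwards with x
      simpa only [Real.norm_eq_abs] using hprod ε hε x
    · filter_upwards with x
      exact ((huεcont x).mul continuous_const).tendsto 0
  have hFt : Tendsto F (𝓝 0) (𝓝 (F 0)) := by
    refine tendsto_integral_filter_of_dominated_convergence
      (fun x => Cβ * (C0 * C0) / (1 + |x|) ^ 2) ?_ ?_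
      (aux_bound_integrable (by positivity)) ?_
    · filter_upwards with ε using
        (hβ.continuous.mul ((huc ε).mul (huc 0))).aestronglyMeasurable
    · filter_upwards [hKmem] with ε hε
      filter_upwards with x
      simpa only [Real.norm_eq_abs] using hprodβ ε hε x
    · filter_upwards with x
      exact (continuous_const.mul ((huεcont x).mul continuous_const)).tendsto 0
  have hG0 : G 0 = 1 := by
    simp only [hGdef]
    rw [← hnorm 0]
    congr 1
    funext x
    ring
  have hF0pos : 0 < F 0 := by
    simp only [hFdef]
    refine (integral_pos_iff_support_of_nonneg ?_ (hFint 0 h0K)).mpr ?_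
    · intro x
      exact mul_nonneg (hβnonneg x) (mul_self_nonneg _)
    · have hco : Continuous fun x => β x * (u x 0 * u x 0) :=
        hβ.continuous.mul ((huc 0).mul (huc 0))
      have hopen : IsOpen {x | 0 < β x * (u x 0 * u x 0)} :=
        isOpen_lt continuous_const hco
      have hsub : {x | 0 < β x * (u x 0 * u x 0)} ⊆
          Function.support fun x => β x * (u x 0 * u x 0) := fun x hx => ne_of_gt hx
      have hx0 : x₀ ∈ {x | 0 < β x * (u x 0 * u x 0)} :=
        mul_pos hβpos (mul_self_pos.mpr (hune x₀))
      exact lt_of_lt_of_le (hopen.measure_pos volume ⟨x₀, hx0⟩) (measure_mono hsub)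
  -- conclusion
  have hGne : ∀ᶠ ε in 𝓝 (0:ℝ), G ε ≠ 0 := hGt.eventually_ne (by rw [hG0]; norm_num)
  have hslope : Tendsto (slope lam 0) (𝓝[≠] (0:ℝ)) (𝓝 (deriv lam 0)) :=
    hasDerivAt_iff_tendsto_slope.mp ((hlam 0).hasDerivAt)
  have hEq : slope lam 0 =ᶠ[𝓝[≠] (0:ℝ)] fun ε => F ε / G ε := by
    filter_upwards [eventually_nhdsWithin_of_eventually_nhds hGne,
      eventually_nhdsWithin_of_eventually_nhds (eventually_of_mem hKmem fun x hx => hx),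
      self_mem_nhdsWithin] with ε hGε hεK hεne
    have hεne' : ε ≠ 0 := hεne
    have hk := hkey ε hεK
    have hs : slope lam 0 ε = (lam ε - lam 0) / ε := by
      rw [slope_def_field]
      rw [div_eq_div_iff (sub_ne_zero.mpr hεne') hεne']
      ring
    rw [hs, div_eq_div_iff hεne' hGε]
    linarith [hk]
  have hFG : Tendsto (fun ε => F ε / G ε) (𝓝[≠] (0:ℝ)) (𝓝 (F 0)) := by
    have h1 : Tendsto (fun ε => F ε / G ε) (𝓝 0) (𝓝 (F 0 / G 0)) :=
      hFt.div hGt (by rw [hG0]; norm_num)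
    rw [hG0, div_one] at h1
    exact h1.mono_left nhdsWithin_le_nhds
  have hfinal : deriv lam 0 = F 0 :=
    tendsto_nhds_unique hslope (hFG.congr' hEq.symm)
  rw [hfinal]
  exact hF0pos
end

section
/- The ground state eigenvalue of the perturbed harmonic oscillator strictly exceeds h: under the stated hypotheses, λ > h. -/
/-!
Multiplying the eigenvalue equation by `u` and integrating by parts gives the energy identity
`λ = h² ‖u'‖² + ‖x u‖² + ∫ ρ u²`. Integrating `(x u²)' = u² + 2 x u u'` gives `∫ x u u' = -1/2`,
so integrating `(h u' + x u)² ≥ 0` yields Heisenberg's inequality `h ≤ h² ‖u'‖² + ‖x u‖²`.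
The perturbation term is strictly positive because `ρ u²` is continuous, nonnegative and
positive at `x₀`.
-/

open MeasureTheory Filter Topology

lemma integrable_mul_of_integrable_sq {α : Type*} [MeasurableSpace α] {μ : Measure α}
    {f g : α → ℝ} (hf : AEStronglyMeasurable f μ) (hg : AEStronglyMeasurable g μ)
    (hf2 : Integrable (fun x => f x ^ 2) μ) (hg2 : Integrable (fun x => g x ^ 2) μ) :
    Integrable (fun x => f x * g x) μ :=
  ((memLp_two_iff_integrable_sq hf).2 hf2).integrable_mul ((memLp_two_iff_integrable_sq hg).2 hg2)

section HarmonicOscillator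

variable {u u' : ℝ → ℝ}

lemma integrable_id_mul_mul_deriv (hu : ∀ x, HasDerivAt u (u' x) x)
    (hxu2 : Integrable fun x => (x * u x) ^ 2) (hu'2 : Integrable fun x => u' x ^ 2) :
    Integrable fun x => x * u x * u' x := by
  have hu' : u' = deriv u := funext fun x => (hu x).deriv.symm
  have hcont : Continuous u := continuous_iff_continuousAt.2 fun x => (hu x).continuousAt
  have hxu_cont : Continuous fun x => x * u x := by fun_prop
  subst hu'
  exact integrable_mul_of_integrable_sq hxu_cont.aestronglyMeasurable
    (measurable_deriv u).aestronglyMeasurable hxu2 hu'2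

lemma integral_id_mul_mul_deriv (hu : ∀ x, HasDerivAt u (u' x) x)
    (hu2 : Integrable fun x => u x ^ 2) (hxu2 : Integrable fun x => (x * u x) ^ 2)
    (hu'2 : Integrable fun x => u' x ^ 2) :
    ∫ x, x * u x * u' x = -(1 / 2) * ∫ x, u x ^ 2 := by
  have hcont : Continuous u := continuous_iff_continuousAt.2 fun x => (hu x).continuousAt
  have hxu_cont : Continuous fun x => x * u x := by fun_prop
  have hxuu' := integrable_id_mul_mul_deriv hu hxu2 hu'2
  have hxu2' : Integrable fun x => x * u x ^ 2 := by
    refine (integrable_mul_of_integrable_sq hxu_cont.aestronglyMeasurable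
      hcont.aestronglyMeasurable hxu2 hu2).congr (ae_of_all _ fun x => ?_)
    ring
  have hderiv : ∀ x, HasDerivAt (fun y => y * u y ^ 2) (u x ^ 2 + 2 * (x * u x * u' x)) x :=
    fun x => ((hasDerivAt_id x).mul ((hu x).pow 2)).congr_deriv (by simp only [Pi.pow_apply, id_eq]; ring)
  have hint : Integrable fun x => u x ^ 2 + 2 * (x * u x * u' x) := hu2.add (hxuu'.const_mul 2)
  have hzero := integral_of_hasDerivAt_of_tendsto hderiv hint
    (tendsto_zero_of_hasDerivAt_of_integrableOn_Iic (a := 0) (fun x _ => hderiv x)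
      hint.integrableOn hxu2'.integrableOn)
    (tendsto_zero_of_hasDerivAt_of_integrableOn_Ioi (a := 0) (fun x _ => hderiv x)
      hint.integrableOn hxu2'.integrableOn)
  rw [integral_add hu2 (hxuu'.const_mul 2), integral_const_mul] at hzero
  linarith

lemma heisenberg_inequality (h : ℝ) (hu : ∀ x, HasDerivAt u (u' x) x)
    (hu2 : Integrable fun x => u x ^ 2) (hxu2 : Integrable fun x => (x * u x) ^ 2)
    (hu'2 : Integrable fun x => u' x ^ 2) :
    h * (∫ x, u x ^ 2) ≤ h ^ 2 * (∫ x, u' x ^ 2) + ∫ x, (x * u x) ^ 2 := calc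
  h * (∫ x, u x ^ 2) = ∫ x, -(2 * h) * (x * u x * u' x) := by
    rw [integral_const_mul, integral_id_mul_mul_deriv hu hu2 hxu2 hu'2]
    ring
  _ ≤ ∫ x, (h ^ 2 * u' x ^ 2 + (x * u x) ^ 2) :=
    integral_mono ((integrable_id_mul_mul_deriv hu hxu2 hu'2).const_mul _)
      ((hu'2.const_mul _).add hxu2) fun x => by nlinarith [sq_nonneg (h * u' x + x * u x)]
  _ = h ^ 2 * (∫ x, u' x ^ 2) + ∫ x, (x * u x) ^ 2 := by
    rw [integral_add (hu'2.const_mul _) hxu2, integral_const_mul]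

lemma eigenvalue_mul_integral_sq_eq {h lam : ℝ} {V u'' : ℝ → ℝ}
    (hu : ∀ x, HasDerivAt u (u' x) x) (hu' : ∀ x, HasDerivAt u' (u'' x) x) (hh : h ≠ 0)
    (heig : ∀ x, -h ^ 2 * u'' x + V x * u x = lam * u x)
    (hu2 : Integrable fun x => u x ^ 2) (hVu2 : Integrable fun x => V x * u x ^ 2)
    (hu'2 : Integrable fun x => u' x ^ 2)
    (hdecay : Tendsto (fun x => u x * u' x) (cocompact ℝ) (𝓝 0)) :
    lam * (∫ x, u x ^ 2) = h ^ 2 * (∫ x, u' x ^ 2) + ∫ x, V x * u x ^ 2 := by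
  have huu'' : Integrable fun x => u x * u'' x := by
    refine ((hVu2.sub (hu2.const_mul lam)).div_const (h ^ 2)).congr (ae_of_all _ fun x => ?_)
    simp only [Pi.sub_apply]
    field_simp
    linear_combination u x * heig x
  have hibp : ∫ x, u x * u'' x = -∫ x, u' x ^ 2 := by
    have := integral_mul_deriv_eq_deriv_mul (fun x _ => hu x) (fun x _ => hu' x) huu''
      (hu'2.congr (ae_of_all _ fun x => sq (u' x)))
      (hdecay.mono_left atBot_le_cocompact) (hdecay.mono_left atTop_le_cocompact)
    simpa [← sq] using this
  calc lam * (∫ x, u x ^ 2) = ∫ x, (-h ^ 2 * (u x * u'' x) + V x * u x ^ 2) := by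
        rw [← integral_const_mul]
        congr 1 with x
        linear_combination -(u x * heig x)
    _ = h ^ 2 * (∫ x, u' x ^ 2) + ∫ x, V x * u x ^ 2 := by
        rw [integral_add (huu''.const_mul _) hVu2, integral_const_mul, hibp]
        ring

end HarmonicOscillator

/-- The ground state eigenvalue of the perturbed harmonic oscillator strictly
exceeds `h`. -/
theorem ground_state_eigenvalue_gt_h
    (h : ℝ) (hh : 0 < h)
    (ρ : ℝ → ℝ) (hρc : Continuous ρ) (hρsupp : HasCompactSupport ρ)
    (hρnonneg : ∀ x, 0 ≤ ρ x) (x₀ : ℝ) (hρpos : 0 < ρ x₀)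
    (u : ℝ → ℝ) (hu : ContDiff ℝ 2 u)
    (hupos : ∀ x, 0 < u x)
    (hnorm : (∫ x, (u x) ^ 2) = 1)
    (hu'2 : Integrable (fun x => (deriv u x) ^ 2))
    (hxu2 : Integrable (fun x => (x * u x) ^ 2))
    (hdecay : Tendsto (fun x => u x * deriv u x) (cocompact ℝ) (nhds 0))
    (lam : ℝ)
    (heig : ∀ x, -h ^ 2 * deriv (deriv u) x + (x ^ 2 + ρ x) * u x = lam * u x) :
    h < lam := by
  have hu₁ : ∀ x, HasDerivAt u (deriv u x) x :=
    fun x => (hu.differentiable two_ne_zero x).hasDerivAt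
  have hu₂ : ∀ x, HasDerivAt (deriv u) (deriv (deriv u) x) x :=
    fun x => ((contDiff_succ_iff_deriv.mp hu).2.2.differentiable one_ne_zero x).hasDerivAt
  have hu2 : Integrable fun x => u x ^ 2 := .of_integral_ne_zero (by simp [hnorm])
  have hρu2_cont : Continuous fun x => ρ x * u x ^ 2 := hρc.mul (hu.continuous.pow 2)
  have hρu2_supp : HasCompactSupport fun x => ρ x * u x ^ 2 := hρsupp.mul_right
  have hρu2 := hρu2_cont.integrable_of_hasCompactSupport (μ := volume) hρu2_supp
  have hperturbation : 0 < ∫ x, ρ x * u x ^ 2 :=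
    hρu2_cont.integral_pos_of_hasCompactSupport_nonneg_nonzero (μ := volume) hρu2_supp
      (fun x => mul_nonneg (hρnonneg x) (sq_nonneg _)) (mul_pos hρpos (pow_pos (hupos x₀) 2)).ne'
  have hsplit : ∫ x, (x ^ 2 + ρ x) * u x ^ 2 = (∫ x, (x * u x) ^ 2) + ∫ x, ρ x * u x ^ 2 := by
    rw [← integral_add hxu2 hρu2]
    congr 1 with x
    ring
  have hVu2 : Integrable fun x => (x ^ 2 + ρ x) * u x ^ 2 :=
    (hxu2.add hρu2).congr (ae_of_all _ fun x => by simp only [Pi.add_apply]; ring)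
  have henergy := eigenvalue_mul_integral_sq_eq hu₁ hu₂ hh.ne' heig hu2 hVu2 hu'2 hdecay
  have hheisenberg := heisenberg_inequality h hu₁ hu2 hxu2 hu'2
  rw [hnorm, hsplit] at henergy
  rw [hnorm] at hheisenberg
  linarith
end

section
/- The eigenvalues of the semiclassical harmonic oscillator are exactly the odd multiples of h: under the stated hypotheses there exists n ∈ ℕ such that λ = (2n+1)h. -/
open MeasureTheory Real Filter Topology Set
open scoped ContDiff

namespace HOaux

/-- Bundle of hypotheses for an eigenfunction. -/
structure Nice (h mu : ℝ) (v : ℝ → ℝ) : Prop where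
  smooth : ContDiff ℝ ∞ v
  int2 : Integrable (fun x => v x ^ 2)
  eig : ∀ x, -h ^ 2 * deriv (deriv v) x + x ^ 2 * v x = mu * v x

variable {h mu : ℝ} {v : ℝ → ℝ}

lemma one_le_inf : (1 : WithTop ℕ∞) ≤ ∞ := by
  exact_mod_cast le_top

lemma Nice.diff (hv : Nice h mu v) : Differentiable ℝ v :=
  hv.smooth.differentiable (by simp)

lemma Nice.smooth' (hv : Nice h mu v) : ContDiff ℝ ∞ (deriv v) :=
  (contDiff_infty_iff_deriv.mp hv.smooth).2

lemma Nice.diff' (hv : Nice h mu v) : Differentiable ℝ (deriv v) :=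
  hv.smooth'.differentiable (by simp)

lemma Nice.smooth'' (hv : Nice h mu v) : ContDiff ℝ ∞ (deriv (deriv v)) :=
  (contDiff_infty_iff_deriv.mp hv.smooth').2

lemma Nice.diff'' (hv : Nice h mu v) : Differentiable ℝ (deriv (deriv v)) :=
  hv.smooth''.differentiable (by simp)

lemma Nice.deriv2_eq (hh : 0 < h) (hv : Nice h mu v) (x : ℝ) :
    deriv (deriv v) x = (x ^ 2 - mu) * v x / h ^ 2 := by
  have h2 : (0:ℝ) < h ^ 2 := by positivity
  have := hv.eig x
  field_simp
  nlinarith [this]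

lemma Nice.hasDerivAt_sq (hv : Nice h mu v) (x : ℝ) :
    HasDerivAt (fun x => v x ^ 2) (2 * (v x * deriv v x)) x := by
  have := (hv.diff x).hasDerivAt.fun_pow 2
  simpa [mul_assoc] using this

/-- A function eventually `≥ 1` at top is not integrable. -/
lemma not_integrable_of_eventually_ge {g : ℝ → ℝ} (N : ℝ) (h1 : ∀ x ≥ N, 1 ≤ g x)
    (hg : Integrable g) : False := by
  have h2 : IntegrableOn g (Ici N) := hg.integrableOn
  have h3 : IntegrableOn (fun _ : ℝ => (1:ℝ)) (Ici N) := by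
    refine h2.mono' aestronglyMeasurable_const ?_
    refine (ae_restrict_iff' measurableSet_Ici).mpr (Eventually.of_forall ?_)
    intro x hx
    simpa using h1 x hx
  rw [integrableOn_const_iff] at h3
  rcases h3 with h3 | h3
  · norm_num at h3
  · simp [Real.volume_Ici] at h3

/-- Decay of an `L²` eigenfunction at `+∞`. -/
lemma Nice.decay_atTop (hh : 0 < h) (hv : Nice h mu v) :
    Tendsto (fun x => v x * deriv v x) atTop (𝓝 0) ∧
    Tendsto (fun x => x * v x ^ 2) atTop (𝓝 0) := by
  set g : ℝ → ℝ := fun x => v x ^ 2 with hgdef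
  set g' : ℝ → ℝ := fun x => 2 * (v x * deriv v x) with hg'def
  set x₀ : ℝ := Real.sqrt (max mu 0) + 1 with hx₀
  have hx₀1 : 1 ≤ x₀ := by
    have := Real.sqrt_nonneg (max mu 0)
    simp only [hx₀]
    linarith
  have hmu : ∀ x, x₀ ≤ x → mu ≤ x ^ 2 := by
    intro x hx
    have h1 : Real.sqrt (max mu 0) ^ 2 = max mu 0 := Real.sq_sqrt (le_max_right _ _)
    have h2 : mu ≤ max mu 0 := le_max_left _ _
    have h3 : 0 ≤ Real.sqrt (max mu 0) := Real.sqrt_nonneg _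
    nlinarith
  -- derivative facts
  have hg : ∀ x, HasDerivAt g (g' x) x := fun x => hv.hasDerivAt_sq x
  have hg'' : ∀ x, HasDerivAt g' (2 * (deriv v x * deriv v x + v x * deriv (deriv v) x)) x := by
    intro x
    exact ((hv.diff x).hasDerivAt.mul (hv.diff' x).hasDerivAt).const_mul 2
  have hcv : Continuous v := hv.smooth.continuous
  have hcv' : Continuous (deriv v) := hv.smooth'.continuous
  have hcg : Continuous g := by fun_prop
  have hcg' : Continuous g' := by fun_prop
  have hdg : ∀ x, deriv g x = g' x := fun x => (hg x).deriv
  -- second derivative of g is nonneg on [x₀, ∞)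
  have hconv : ∀ x, x₀ ≤ x → 0 ≤ deriv g' x := by
    intro x hx
    rw [(hg'' x).deriv]
    have h1 : v x * deriv (deriv v) x = (x ^ 2 - mu) * v x ^ 2 / h ^ 2 := by
      rw [hv.deriv2_eq hh]; ring
    have h2 : 0 ≤ (x ^ 2 - mu) * v x ^ 2 / h ^ 2 := by
      apply div_nonneg (mul_nonneg (by linarith [hmu x hx]) (sq_nonneg _)) (by positivity)
    nlinarith [sq_nonneg (deriv v x)]
  -- g' is monotone on [x₀, ∞)
  have hg'mono : MonotoneOn g' (Ici x₀) := by
    refine monotoneOn_of_deriv_nonneg (convex_Ici x₀) hcg'.continuousOn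
      (fun x _ => (hg'' x).differentiableAt.differentiableWithinAt) ?_
    intro x hx
    rw [interior_Ici] at hx
    exact hconv x (le_of_lt hx)
  -- g' ≤ 0 on [x₀, ∞)
  have hg'le : ∀ x, x₀ ≤ x → g' x ≤ 0 := by
    intro a ha
    by_contra hc
    push_neg at hc
    set c := g' a with hcdef
    -- g x ≥ g a + c (x - a) for x ≥ a
    have hmono : MonotoneOn (fun x => g x - c * x) (Ici a) := by
      have hD : ∀ x : ℝ, HasDerivAt (fun y => g y - c * y) (g' x - c) x := by
        intro x
        simpa using (hg x).fun_sub ((hasDerivAt_id x).const_mul c)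
      refine monotoneOn_of_deriv_nonneg (convex_Ici a)
        (by fun_prop) (fun x _ => (hD x).differentiableAt.differentiableWithinAt) ?_
      intro x hx
      rw [interior_Ici] at hx
      rw [(hD x).deriv]
      have := hg'mono (mem_Ici.mpr ha) (mem_Ici.mpr (ha.trans hx.le)) hx.le
      linarith
    have hgrow : ∀ x, a ≤ x → g a + c * (x - a) ≤ g x := by
      intro x hx
      have := hmono (self_mem_Ici) (mem_Ici.mpr hx) hx
      simp only at this
      linarith
    -- eventually g ≥ 1, contradiction
    refine not_integrable_of_eventually_ge (max a ((1 - g a) / c + a)) ?_ hv.int2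
    intro x hx
    have hxa : a ≤ x := le_trans (le_max_left _ _) hx
    have hxb : (1 - g a) / c + a ≤ x := le_trans (le_max_right _ _) hx
    have h1 : (1 - g a) / c ≤ x - a := by linarith
    have h2 : 1 - g a ≤ c * (x - a) := by
      rw [div_le_iff₀ hc] at h1; linarith
    have h3 : g a + c * (x - a) ≤ v x ^ 2 := hgrow x hxa
    linarith
  -- g is antitone on [x₀, ∞)
  have hganti : AntitoneOn g (Ici x₀) := by
    refine antitoneOn_of_deriv_nonpos (convex_Ici x₀) hcg.continuousOn
      (fun x _ => (hg x).differentiableAt.differentiableWithinAt) ?_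
    intro x hx
    rw [interior_Ici] at hx
    rw [hdg]
    exact hg'le x hx.le
  -- tail integrals tend to 0
  set F : ℝ → ℝ := fun x => ∫ t in x₀..x, g t with hFdef
  have hgiOn : IntegrableOn g (Ioi x₀) := hv.int2.integrableOn
  have hFlim : Tendsto F atTop (𝓝 (∫ t in Ioi x₀, g t)) :=
    intervalIntegral_tendsto_integral_Ioi x₀ hgiOn tendsto_id
  have hFsub : ∀ y x : ℝ, F x - F y = ∫ t in y..x, g t := by
    intro y x
    have := intervalIntegral.integral_add_adjacent_intervals (μ := volume)
      (hcg.intervalIntegrable x₀ y) (hcg.intervalIntegrable y x)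
    simp only [hFdef]
    linarith
  -- x * g x → 0
  have hxg : Tendsto (fun x => x * g x) atTop (𝓝 0) := by
    have hlim2 : Tendsto (fun x => 2 * (F x - F (x / 2))) atTop (𝓝 0) := by
      have h2 : Tendsto (fun x : ℝ => x / 2) atTop atTop := by
        exact tendsto_id.atTop_div_const two_pos
      have := (hFlim.sub (hFlim.comp h2)).const_mul 2
      simpa using this
    refine tendsto_of_tendsto_of_tendsto_of_le_of_le'
      (tendsto_const_nhds) hlim2 ?_ ?_
    · filter_upwards [eventually_ge_atTop (0:ℝ)] with x hx
      exact mul_nonneg hx (sq_nonneg _)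
    · filter_upwards [eventually_ge_atTop (2 * x₀)] with x hx
      have hx0 : 0 < x := by linarith
      have hx2 : x₀ ≤ x / 2 := by linarith
      have hxx : x₀ ≤ x := by linarith
      have key : ∫ t in (x/2)..x, g x ≤ ∫ t in (x/2)..x, g t := by
        refine intervalIntegral.integral_mono_on (by linarith)
          (intervalIntegrable_const) (hcg.intervalIntegrable _ _) ?_
        intro t ht
        exact hganti (mem_Ici.mpr (hx2.trans ht.1)) (mem_Ici.mpr hxx) ht.2
      rw [intervalIntegral.integral_const, smul_eq_mul] at key
      rw [hFsub (x/2) x]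
      nlinarith [key]
  -- g' → 0
  have hg'0 : Tendsto g' atTop (𝓝 0) := by
    rw [Metric.tendsto_atTop]
    intro ε hε
    -- first find a point where g' > -ε
    have hex : ∃ a, x₀ ≤ a ∧ -ε < g' a := by
      by_contra hc
      push_neg at hc
      -- then g x + ε x is antitone, so g becomes negative
      have hanti : AntitoneOn (fun x => g x + ε * x) (Ici x₀) := by
        have hD : ∀ x : ℝ, HasDerivAt (fun y => g y + ε * y) (g' x + ε) x := by
          intro x
          simpa using (hg x).fun_add ((hasDerivAt_id x).const_mul ε)
        refine antitoneOn_of_deriv_nonpos (convex_Ici x₀) (by fun_prop)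
          (fun x _ => (hD x).differentiableAt.differentiableWithinAt) ?_
        intro x hx
        rw [interior_Ici] at hx
        rw [(hD x).deriv]
        have := hc x hx.le
        linarith
      set X := max x₀ ((g x₀ + ε * x₀) / ε + 1) with hX
      have hX1 : x₀ ≤ X := le_max_left _ _
      have hX2 : (g x₀ + ε * x₀) / ε + 1 ≤ X := le_max_right _ _
      have := hanti self_mem_Ici (mem_Ici.mpr hX1) hX1
      simp only at this
      have hgX : 0 ≤ g X := sq_nonneg _
      have : ε * X ≤ g x₀ + ε * x₀ := by linarith
      rw [← le_div_iff₀' hε] at this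
      linarith
    obtain ⟨a, ha, hga⟩ := hex
    refine ⟨a, fun x hx => ?_⟩
    have h1 : g' a ≤ g' x := hg'mono (mem_Ici.mpr ha) (mem_Ici.mpr (ha.trans hx)) hx
    have h2 : g' x ≤ 0 := hg'le x (ha.trans hx)
    rw [Real.dist_eq, sub_zero, abs_lt]
    constructor <;> linarith
  constructor
  · have := hg'0.div_const 2
    simp only [hg'def] at this
    simpa using this
  · exact hxg


/-- Reflection preserves the hypotheses. -/
lemma Nice.neg (hv : Nice h mu v) : Nice h mu (fun x => v (-x)) := by
  have hdw : ∀ x : ℝ, HasDerivAt (fun x => v (-x)) (-deriv v (-x)) x := by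
    intro x
    simpa [Function.comp_def] using ((hv.diff (-x)).hasDerivAt.comp x (hasDerivAt_neg x))
  have hdw1 : deriv (fun x => v (-x)) = fun x => -deriv v (-x) :=
    funext fun x => (hdw x).deriv
  have hdw2 : ∀ x : ℝ, deriv (deriv (fun x => v (-x))) x = deriv (deriv v) (-x) := by
    intro x
    rw [hdw1]
    have : HasDerivAt (fun x : ℝ => -deriv v (-x)) (deriv (deriv v) (-x)) x := by
      simpa [Function.comp_def] using ((hv.diff' (-x)).hasDerivAt.comp x (hasDerivAt_neg x)).fun_neg
    exact this.deriv
  refine ⟨hv.smooth.comp contDiff_neg, ?_, ?_⟩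
  · exact hv.int2.comp_neg
  · intro x
    rw [hdw2 x]
    have := hv.eig (-x)
    have hsq : (-x) ^ 2 = x ^ 2 := neg_sq x
    rw [hsq] at this
    simpa using this

lemma Nice.deriv_neg (hv : Nice h mu v) :
    deriv (fun x => v (-x)) = fun x => -deriv v (-x) :=
  funext fun x => by
    simpa [Function.comp_def] using (((hv.diff (-x)).hasDerivAt.comp x (hasDerivAt_neg x)).deriv)

lemma Nice.decay_atBot (hh : 0 < h) (hv : Nice h mu v) :
    Tendsto (fun x => v x * deriv v x) atBot (𝓝 0) ∧
    Tendsto (fun x => x * v x ^ 2) atBot (𝓝 0) := by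
  obtain ⟨T1, T2⟩ := (hv.neg).decay_atTop hh
  rw [hv.deriv_neg] at T1
  have A1 := (T1.comp tendsto_neg_atBot_atTop).neg
  have A2 := (T2.comp tendsto_neg_atBot_atTop).neg
  constructor
  · have : (fun x : ℝ => v x * deriv v x)
        = fun x => -((fun y : ℝ => v (-y) * -deriv v (-y)) (-x)) := by
      funext x; simp
    rw [this]
    simpa using A1
  · have : (fun x : ℝ => x * v x ^ 2)
        = fun x => -((fun y : ℝ => y * v (-y) ^ 2) (-x)) := by
      funext x; simp
    rw [this]
    simpa using A2

/-- Energy identities for an eigenfunction. -/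
lemma Nice.energy (hh : 0 < h) (hv : Nice h mu v) :
    Integrable (fun x => (deriv v x) ^ 2) ∧ Integrable (fun x => x ^ 2 * v x ^ 2) ∧
    Integrable (fun x => x * (v x * deriv v x)) ∧
    h ^ 2 * (∫ x, (deriv v x) ^ 2) + ∫ x, x ^ 2 * v x ^ 2 = mu * ∫ x, v x ^ 2 ∧
    (∫ x, x * (v x * deriv v x)) = -(∫ x, v x ^ 2) / 2 := by
  have hcv : Continuous v := hv.smooth.continuous
  have hcv' : Continuous (deriv v) := hv.smooth'.continuous
  have h2 : (0:ℝ) < h ^ 2 := by positivity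
  obtain ⟨Ttop1, Ttop2⟩ := hv.decay_atTop hh
  obtain ⟨Tbot1, Tbot2⟩ := hv.decay_atBot hh
  set P : ℝ → ℝ := fun x => h ^ 2 * (deriv v x) ^ 2 + x ^ 2 * v x ^ 2 with hPdef
  have hP0 : ∀ x, 0 ≤ P x := fun x => by positivity
  have hPc : Continuous P := by fun_prop
  set G : ℝ → ℝ := fun x => h ^ 2 * (v x * deriv v x) with hGdef
  have hG : ∀ x, HasDerivAt G (P x - mu * v x ^ 2) x := by
    intro x
    have h1 : HasDerivAt G
        (h ^ 2 * (deriv v x * deriv v x + v x * deriv (deriv v) x)) x :=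
      ((hv.diff x).hasDerivAt.mul (hv.diff' x).hasDerivAt).const_mul (h ^ 2)
    convert h1 using 1
    rw [hv.deriv2_eq hh]
    field_simp
    ring
  have hIBP : ∀ R : ℝ, ∫ x in (-R)..R, (P x - mu * v x ^ 2) = G R - G (-R) := by
    intro R
    exact intervalIntegral.integral_eq_sub_of_hasDerivAt (fun x _ => hG x)
      ((by fun_prop : Continuous (fun x => P x - mu * v x ^ 2)).intervalIntegrable _ _)
  have hsplit : ∀ R : ℝ, ∫ x in (-R)..R, P x
      = G R - G (-R) + mu * ∫ x in (-R)..R, v x ^ 2 := by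
    intro R
    have e1 : ∫ x in (-R)..R, (P x - mu * v x ^ 2)
        = (∫ x in (-R)..R, P x) - mu * ∫ x in (-R)..R, v x ^ 2 := by
      rw [intervalIntegral.integral_sub (hPc.intervalIntegrable _ _)
        ((by fun_prop : Continuous (fun x => mu * v x ^ 2)).intervalIntegrable _ _),
        intervalIntegral.integral_const_mul]
    have := hIBP R
    linarith
  -- the limit of the right-hand side
  have hGtop : Tendsto G atTop (𝓝 0) := by
    simpa using Ttop1.const_mul (h ^ 2)
  have hGbot : Tendsto (fun R => G (-R)) atTop (𝓝 0) := by
    have := (Tbot1.const_mul (h ^ 2)).comp tendsto_neg_atTop_atBot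
    rw [mul_zero] at this
    exact this
  have hIlim : Tendsto (fun R => ∫ x in (-R)..R, v x ^ 2) atTop (𝓝 (∫ x, v x ^ 2)) :=
    intervalIntegral_tendsto_integral hv.int2 tendsto_neg_atTop_atBot tendsto_id
  have hRHS : Tendsto (fun R => G R - G (-R) + mu * ∫ x in (-R)..R, v x ^ 2)
      atTop (𝓝 (mu * ∫ x, v x ^ 2)) := by
    have := (hGtop.sub hGbot).add (hIlim.const_mul mu)
    simpa using this
  have hPlim : Tendsto (fun R => ∫ x in (-R)..R, P x) atTop (𝓝 (mu * ∫ x, v x ^ 2)) :=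
    hRHS.congr (fun R => (hsplit R).symm)
  have hPint : Integrable P := by
    refine integrable_of_intervalIntegral_norm_tendsto (mu * ∫ x, v x ^ 2)
      (fun i : ℝ => hPc.integrableOn_Ioc) tendsto_neg_atTop_atBot tendsto_id ?_
    have : ∀ R : ℝ, ∫ x in (-R)..R, ‖P x‖ = ∫ x in (-R)..R, P x := by
      intro R
      exact intervalIntegral.integral_congr fun x _ => Real.norm_of_nonneg (hP0 x)
    exact hPlim.congr (fun R => (this R).symm)
  have hPval : ∫ x, P x = mu * ∫ x, v x ^ 2 :=
    tendsto_nhds_unique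
      (intervalIntegral_tendsto_integral hPint tendsto_neg_atTop_atBot tendsto_id) hPlim
  -- individual integrabilities
  have hmul1 : h ^ 2 * (1 / h ^ 2) = 1 := by field_simp
  have hi1 : Integrable (fun x => (deriv v x) ^ 2) := by
    refine (hPint.const_mul (1 / h ^ 2)).mono'
      (Continuous.aestronglyMeasurable (by fun_prop)) (Eventually.of_forall fun x => ?_)
    rw [Real.norm_of_nonneg (sq_nonneg _)]
    have hx : 0 ≤ x ^ 2 * v x ^ 2 := by positivity
    have h3 : 0 < 1 / h ^ 2 := by positivity
    simp only [hPdef]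
    nlinarith [sq_nonneg (deriv v x)]
  have hi2 : Integrable (fun x => x ^ 2 * v x ^ 2) := by
    refine hPint.mono' (Continuous.aestronglyMeasurable (by fun_prop))
      (Eventually.of_forall fun x => ?_)
    have hx : 0 ≤ x ^ 2 * v x ^ 2 := by positivity
    rw [Real.norm_of_nonneg hx]
    simp only [hPdef]
    nlinarith [sq_nonneg (h * deriv v x)]
  have henergy : h ^ 2 * (∫ x, (deriv v x) ^ 2) + ∫ x, x ^ 2 * v x ^ 2
      = mu * ∫ x, v x ^ 2 := by
    rw [← hPval, hPdef]
    rw [integral_add (hi1.const_mul _) hi2, integral_const_mul]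
  -- cross term
  have hcross : Integrable (fun x => x * (v x * deriv v x)) := by
    refine ((hi2.add hi1).const_mul (1 / 2)).mono'
      (Continuous.aestronglyMeasurable (by fun_prop)) (Eventually.of_forall fun x => ?_)
    rw [Real.norm_eq_abs, abs_le]
    simp only [Pi.add_apply]
    constructor <;> nlinarith [sq_nonneg (x * v x + deriv v x), sq_nonneg (x * v x - deriv v x)]
  set Q : ℝ → ℝ := fun x => v x ^ 2 + 2 * (x * (v x * deriv v x)) with hQdef
  have hH : ∀ x : ℝ, HasDerivAt (fun y => y * v y ^ 2) (Q x) x := by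
    intro x
    have := (hasDerivAt_id x).fun_mul (hv.hasDerivAt_sq x)
    refine this.congr_deriv ?_
    simp only [hQdef, id]
    ring
  have hIBP2 : ∀ R : ℝ, ∫ x in (-R)..R, Q x = R * v R ^ 2 - (-R) * v (-R) ^ 2 := by
    intro R
    exact intervalIntegral.integral_eq_sub_of_hasDerivAt (fun x _ => hH x)
      ((by fun_prop : Continuous Q).intervalIntegrable _ _)
  have hQint : Integrable Q := hv.int2.add (hcross.const_mul 2)
  have hQlim0 : Tendsto (fun R : ℝ => R * v R ^ 2 - (-R) * v (-R) ^ 2) atTop (𝓝 0) := by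
    have hb : Tendsto (fun R : ℝ => (-R) * v (-R) ^ 2) atTop (𝓝 0) := by
      have := Tbot2.comp tendsto_neg_atTop_atBot
      simpa [Function.comp_def] using this
    simpa using Ttop2.sub hb
  have hQval : ∫ x, Q x = 0 := by
    refine tendsto_nhds_unique
      (intervalIntegral_tendsto_integral hQint tendsto_neg_atTop_atBot tendsto_id) ?_
    exact hQlim0.congr (fun R => (hIBP2 R).symm)
  have hcrossval : (∫ x, x * (v x * deriv v x)) = -(∫ x, v x ^ 2) / 2 := by
    have : ∫ x, Q x = (∫ x, v x ^ 2) + 2 * ∫ x, x * (v x * deriv v x) := by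
      rw [hQdef, integral_add hv.int2 (hcross.const_mul 2), integral_const_mul]
    rw [hQval] at this
    linarith
  exact ⟨hi1, hi2, hcross, henergy, hcrossval⟩

lemma Nice.deriv3_eq (hh : 0 < h) (hv : Nice h mu v) (x : ℝ) :
    deriv (deriv (deriv v)) x = (2 * x * v x + (x ^ 2 - mu) * deriv v x) / h ^ 2 := by
  have e : deriv (deriv v) = fun y => (y ^ 2 - mu) * v y / h ^ 2 :=
    funext (hv.deriv2_eq hh)
  rw [e]
  have h1 : HasDerivAt (fun y : ℝ => (y ^ 2 - mu) * v y / h ^ 2)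
      ((2 * x ^ 1 * v x + (x ^ 2 - mu) * deriv v x) / h ^ 2) x := by
    exact (((hasDerivAt_pow 2 x).sub_const mu).mul (hv.diff x).hasDerivAt).div_const (h ^ 2)
  rw [h1.deriv]
  ring

/-- The lowering operator: eigenfunction with eigenvalue `mu - 2h`, norm identity. -/
lemma Nice.ladder (hh : 0 < h) (hv : Nice h mu v) :
    Nice h (mu - 2 * h) (fun x => h * deriv v x + x * v x) ∧
    (∫ x, (h * deriv v x + x * v x) ^ 2) = (mu - h) * ∫ x, v x ^ 2 := by
  obtain ⟨hi1, hi2, hcross, henergy, hcrossval⟩ := hv.energy hh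
  have hcv : Continuous v := hv.smooth.continuous
  have hcv' : Continuous (deriv v) := hv.smooth'.continuous
  set w : ℝ → ℝ := fun x => h * deriv v x + x * v x with hwdef
  set w' : ℝ → ℝ := fun x => h * deriv (deriv v) x + (v x + x * deriv v x) with hw'def
  have hw1 : ∀ x, HasDerivAt w (w' x) x := by
    intro x
    have h1 : HasDerivAt (fun y : ℝ => y * v y) (1 * v x + x * deriv v x) x :=
      (hasDerivAt_id' x).mul (hv.diff x).hasDerivAt
    have h2 := ((hv.diff' x).hasDerivAt.const_mul h).fun_add h1
    refine h2.congr_deriv ?_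
    simp only [hw'def]
    ring
  have hdw : deriv w = w' := funext fun x => (hw1 x).deriv
  have hw2 : ∀ x, HasDerivAt w'
      (h * deriv (deriv (deriv v)) x + (deriv v x + (1 * deriv v x + x * deriv (deriv v) x))) x := by
    intro x
    exact ((hv.diff'' x).hasDerivAt.const_mul h).add
      ((hv.diff x).hasDerivAt.add ((hasDerivAt_id' x).mul (hv.diff' x).hasDerivAt))
  have hddw : ∀ x, deriv (deriv w) x
      = h * deriv (deriv (deriv v)) x + 2 * deriv v x + x * deriv (deriv v) x := by
    intro x
    rw [hdw, (hw2 x).deriv]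
    ring
  have hsm : ContDiff ℝ ∞ w := (contDiff_const.mul hv.smooth').add (contDiff_id.mul hv.smooth)
  have hint : Integrable (fun x => w x ^ 2) := by
    have e : (fun x => w x ^ 2) = fun x =>
        h ^ 2 * (deriv v x) ^ 2 + 2 * h * (x * (v x * deriv v x)) + x ^ 2 * v x ^ 2 := by
      funext x
      simp only [hwdef]
      ring
    rw [e]
    exact ((hi1.const_mul _).add (hcross.const_mul _)).add hi2
  have heigw : ∀ x, -h ^ 2 * deriv (deriv w) x + x ^ 2 * w x = (mu - 2 * h) * w x := by
    intro x
    rw [hddw x, hv.deriv3_eq hh x, hv.deriv2_eq hh x]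
    simp only [hwdef]
    field_simp
    ring
  refine ⟨⟨hsm, hint, heigw⟩, ?_⟩
  have e : (fun x => w x ^ 2) = fun x =>
      h ^ 2 * (deriv v x) ^ 2 + 2 * h * (x * (v x * deriv v x)) + x ^ 2 * v x ^ 2 := by
    funext x
    simp only [hwdef]
    ring
  calc ∫ x, w x ^ 2
      = ∫ x, (h ^ 2 * (deriv v x) ^ 2 + 2 * h * (x * (v x * deriv v x)) + x ^ 2 * v x ^ 2) := by
        rw [e]
    _ = (h ^ 2 * ∫ x, (deriv v x) ^ 2) + 2 * h * (∫ x, x * (v x * deriv v x))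
        + ∫ x, x ^ 2 * v x ^ 2 := by
        have hiA : Integrable (fun x => h ^ 2 * (deriv v x) ^ 2) := hi1.const_mul _
        have hiB : Integrable (fun x => 2 * h * (x * (v x * deriv v x))) := hcross.const_mul _
        have hiAB : Integrable
            (fun x => h ^ 2 * (deriv v x) ^ 2 + 2 * h * (x * (v x * deriv v x))) := hiA.add hiB
        rw [integral_add hiAB hi2, integral_add hiA hiB, integral_const_mul, integral_const_mul]
    _ = (mu - h) * ∫ x, v x ^ 2 := by
        rw [hcrossval]
        linarith [henergy]

/-- A continuous, somewhere-nonzero, square-integrable function has positive `L²` norm. -/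
lemma sq_integral_pos {v : ℝ → ℝ} (hc : Continuous v) (hv2 : Integrable (fun x => v x ^ 2))
    (hne : ∃ x, v x ≠ 0) : 0 < ∫ x, v x ^ 2 := by
  rcases (integral_nonneg (f := fun x => v x ^ 2) (fun x => sq_nonneg (v x))).lt_or_eq with hlt | heq
  · exact hlt
  · exfalso
    have h0 : (fun x => v x ^ 2) =ᵐ[volume] 0 := by
      rw [← integral_eq_zero_iff_of_nonneg (fun x => sq_nonneg (v x)) hv2]
      exact heq.symm
    have : (fun x => v x ^ 2) = (0 : ℝ → ℝ) :=
      Continuous.ae_eq_iff_eq volume (by fun_prop) continuous_const |>.mp h0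
    obtain ⟨x, hx⟩ := hne
    have := congrFun this x
    simp only [Pi.zero_apply] at this
    exact hx (sq_eq_zero_iff.mp this)

end HOaux

open HOaux

/-- The eigenvalues of the semiclassical harmonic oscillator are exactly the odd
multiples of `h`. -/
theorem harmonic_oscillator_eigenvalues
    (h : ℝ) (hh : 0 < h)
    (u : ℝ → ℝ) (hu : ContDiff ℝ (⊤ : ℕ∞) u)
    (hu2 : Integrable (fun x => (u x) ^ 2))
    (hune : ∃ x, u x ≠ 0)
    (lam : ℝ)
    (heig : ∀ x, -h ^ 2 * deriv (deriv u) x + x ^ 2 * u x = lam * u x) :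
    ∃ n : ℕ, lam = (2 * n + 1) * h := by
  classical
  set A : (ℝ → ℝ) → (ℝ → ℝ) := fun f x => h * deriv f x + x * f x with hA
  set U : ℕ → ℝ → ℝ := fun n => A^[n] u with hU
  have hU0 : U 0 = u := rfl
  have hUs : ∀ n, U (n + 1) = fun x => h * deriv (U n) x + x * U n x := by
    intro n
    show A^[n + 1] u = _
    rw [Function.iterate_succ_apply']
  have hN : ∀ n : ℕ, Nice h (lam - 2 * n * h) (U n) := by
    intro n
    induction n with
    | zero =>
      rw [hU0]
      have e : lam - 2 * ((0:ℕ):ℝ) * h = lam := by norm_num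
      rw [e]
      exact ⟨hu.of_le (by simp), hu2, heig⟩
    | succ n ih =>
      have hl := (ih.ladder hh).1
      have e : lam - 2 * ((n + 1 : ℕ) : ℝ) * h = lam - 2 * (n : ℝ) * h - 2 * h := by
        push_cast
        ring
      rw [hUs n, e]
      exact hl
  have hstep : ∀ n : ℕ, (∫ x, U (n + 1) x ^ 2) = (lam - 2 * n * h - h) * ∫ x, U n x ^ 2 := by
    intro n
    have := ((hN n).ladder hh).2
    rw [hUs n]
    exact this
  by_contra hno
  push_neg at hno
  have hpos : ∀ n : ℕ, 0 < ∫ x, U n x ^ 2 := by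
    intro n
    induction n with
    | zero =>
      rw [hU0]
      exact sq_integral_pos hu.continuous hu2 hune
    | succ n ih =>
      rcases (integral_nonneg (f := fun x => U (n+1) x ^ 2) (fun x => sq_nonneg (U (n+1) x))).lt_or_eq with hlt | heq
      · exact hlt
      · exfalso
        have h1 : (lam - 2 * n * h - h) * ∫ x, U n x ^ 2 = 0 := by
          rw [← hstep n]; exact heq.symm
        rcases mul_eq_zero.mp h1 with h2 | h2
        · exact hno n (by linarith)
        · exact (ne_of_gt ih) h2
  have hgt : ∀ n : ℕ, 0 < lam - 2 * n * h - h := by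
    intro n
    have h1 := hstep n
    nlinarith [hpos n, hpos (n + 1)]
  obtain ⟨n, hn⟩ := exists_nat_ge (lam / h)
  have h1 : lam ≤ (n : ℝ) * h := by
    rw [div_le_iff₀ hh] at hn
    linarith
  have h2 := hgt n
  have h3 : (0:ℝ) ≤ (n : ℝ) := n.cast_nonneg
  nlinarith
end

section
/- Uniqueness up to scalars of the solution of the Weber equation that decays at −∞: if u and v are two solutions both tending to 0 as x → −∞, then u and v are linearly dependent, i.e. there exist constants c₁, c₂, not both zero, with c₁ u(x) + c₂ v(x) = 0 for all x. -/
/-! For `x ≤ a := -(|λ| + 1)` the potential `x² - λ` is nonnegative, so for every solution `y`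
decaying at `-∞` the function `y²` is convex on `(-∞, a]` and tends to `0` there; hence
`(y²)'(a) = 2 y(a) y'(a) ≥ 0`. Applied to the combination of `u` and `v` whose value and
derivative at `a` are `W` and `-W`, with `W` the Wronskian at `a`, this forces `W = 0`. A nontrivial
combination of `u` and `v` then has zero Cauchy data at `a`, so it vanishes identically by
uniqueness for the ODE. -/

open Filter Set Topology

theorem ConvexOn.hasDerivAt_nonneg_of_tendsto_atBot {f : ℝ → ℝ} {a f' l : ℝ}
    (hf : ConvexOn ℝ (Iic a) f) (hlim : Tendsto f atBot (𝓝 l)) (hf' : HasDerivAt f f' a) :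
    0 ≤ f' := by
  have hslope : Tendsto (fun x => slope f x a) atBot (𝓝 0) := by
    have hinv : Tendsto (fun x => (a - x)⁻¹) atBot (𝓝 0) :=
      (tendsto_atTop_add_const_left _ a tendsto_neg_atBot_atTop).inv_tendsto_atTop
    have := hinv.mul ((tendsto_const_nhds (x := f a)).sub hlim)
    rw [zero_mul] at this
    refine this.congr fun x => ?_
    rw [slope_def_field, div_eq_inv_mul]
  refine le_of_tendsto hslope ?_
  filter_upwards [eventually_lt_atBot a] with x hx
  exact hf.slope_le_of_hasDerivAt hx.le self_mem_Iic hx hf'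

lemma lipschitzWith_swap_mul (q : ℝ) :
    LipschitzWith (max 1 ‖q‖₊) (fun p : ℝ × ℝ => (p.2, q * p.1)) :=
  LipschitzWith.prod_snd.prodMk
    ((lipschitzWith_smul q).comp LipschitzWith.prod_fst |>.weaken (by simp))

/-- `y` solves `y'' = Q y` on `ℝ`, with derivative `dy`. -/
structure IsSchrodingerSolution (Q y dy : ℝ → ℝ) : Prop where
  hasDerivAt : ∀ x, HasDerivAt y (dy x) x
  hasDerivAt_deriv : ∀ x, HasDerivAt dy (Q x * y x) x

namespace IsSchrodingerSolution

variable {Q u du v dv y dy : ℝ → ℝ}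

theorem of_contDiff (hy : ContDiff ℝ 2 y) (heq : ∀ x, deriv (deriv y) x = Q x * y x) :
    IsSchrodingerSolution Q y (deriv y) where
  hasDerivAt x := (hy.differentiable two_ne_zero x).hasDerivAt
  hasDerivAt_deriv x := heq x ▸ ((hy.iterate_deriv' 1 1).differentiable one_ne_zero x).hasDerivAt

theorem linear_comb (hu : IsSchrodingerSolution Q u du) (hv : IsSchrodingerSolution Q v dv)
    (s t : ℝ) :
    IsSchrodingerSolution Q (fun x => s * u x + t * v x) (fun x => s * du x + t * dv x) where
  hasDerivAt x := ((hu.hasDerivAt x).const_mul s).add ((hv.hasDerivAt x).const_mul t)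
  hasDerivAt_deriv x :=
    ((hu.hasDerivAt_deriv x).const_mul s).add ((hv.hasDerivAt_deriv x).const_mul t)
      |>.congr_deriv (by ring)

theorem convexOn_sq {D : Set ℝ} (hD : Convex ℝ D) (hy : IsSchrodingerSolution Q y dy)
    (hQ : ∀ x ∈ D, 0 ≤ Q x) : ConvexOn ℝ D (fun x => y x ^ 2) := by
  refine convexOn_of_hasDerivWithinAt2_nonneg hD (f' := fun x => 2 * y x * dy x)
    (f'' := fun x => 2 * dy x ^ 2 + 2 * Q x * y x ^ 2) ?_ (fun x _ => ?_) (fun x _ => ?_) ?_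
  · exact fun x _ => ((hy.hasDerivAt x).continuousAt.pow 2).continuousWithinAt
  · exact ((hy.hasDerivAt x).pow 2 |>.congr_deriv (by ring)).hasDerivWithinAt
  · refine ((hy.hasDerivAt x).const_mul 2 |>.mul (hy.hasDerivAt_deriv x)).congr_deriv ?_
      |>.hasDerivWithinAt
    ring
  · intro x hx
    have := hQ x (interior_subset hx)
    positivity

theorem mul_deriv_nonneg_of_tendsto_atBot {a : ℝ} (hy : IsSchrodingerSolution Q y dy)
    (hQ : ∀ x ≤ a, 0 ≤ Q x) (hlim : Tendsto y atBot (𝓝 0)) : 0 ≤ y a * dy a := by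
  have hsq : HasDerivAt (fun x => y x ^ 2) (2 * (y a * dy a)) a :=
    (hy.hasDerivAt a).pow 2 |>.congr_deriv (by ring)
  have := (hy.convexOn_sq (convex_Iic a) hQ).hasDerivAt_nonneg_of_tendsto_atBot
    (by simpa using hlim.pow 2) hsq
  linarith

/-- The combination `y = (dv a + v a) u - (du a + u a) v` has `y a = W` and `dy a = -W`, where
`W` is the Wronskian at `a`; so `0 ≤ y a * dy a = -W ^ 2`. -/
theorem wronskian_eq_zero_of_tendsto_atBot {a : ℝ} (hu : IsSchrodingerSolution Q u du)
    (hv : IsSchrodingerSolution Q v dv) (hQ : ∀ x ≤ a, 0 ≤ Q x)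
    (hulim : Tendsto u atBot (𝓝 0)) (hvlim : Tendsto v atBot (𝓝 0)) :
    u a * dv a - du a * v a = 0 := by
  have hlim : Tendsto (fun x => (dv a + v a) * u x + -(du a + u a) * v x) atBot (𝓝 0) := by
    simpa using (hulim.const_mul (dv a + v a)).add (hvlim.const_mul (-(du a + u a)))
  have := (hu.linear_comb hv _ _).mul_deriv_nonneg_of_tendsto_atBot hQ hlim
  nlinarith

theorem eq_zero_of_eq_zero_of_deriv_eq_zero (hQ : Continuous Q)
    (hy : IsSchrodingerSolution Q y dy) {x₀ : ℝ} (h₀ : y x₀ = 0) (h₀' : dy x₀ = 0) :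
    y = 0 := by
  ext x
  obtain ⟨A, B, hx, hx₀⟩ : ∃ A B, x ∈ Ioo A B ∧ x₀ ∈ Ioo A B :=
    ⟨min x x₀ - 1, max x x₀ + 1, by grind, by grind⟩
  obtain ⟨C, hC⟩ := isCompact_Icc.exists_bound_of_continuousOn (hQ.continuousOn (s := Icc A B))
  have hlip : ∀ t ∈ Ioo A B, LipschitzOnWith (max 1 C.toNNReal)
      (fun p : ℝ × ℝ => (p.2, Q t * p.1)) univ := fun t ht =>
    (lipschitzWith_swap_mul (Q t)).weaken (max_le_max le_rfl
      (NNReal.le_toNNReal_of_coe_le (hC t (Ioo_subset_Icc_self ht)))) |>.lipschitzOnWith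
  have hsys := ODE_solution_unique_of_mem_Ioo hlip hx₀
    (f := fun t => (y t, dy t)) (g := fun _ => 0) (s := fun _ => univ)
    (fun t _ => ⟨(hy.hasDerivAt t).prodMk (hy.hasDerivAt_deriv t), mem_univ _⟩)
    (fun t _ => ⟨(hasDerivAt_const t 0).congr_deriv (by ext <;> simp), mem_univ _⟩)
    (by simp [h₀, h₀']) hx
  exact congrArg Prod.fst hsys

theorem exists_linear_dependence_of_wronskian_eq_zero (hQ : Continuous Q)
    (hu : IsSchrodingerSolution Q u du) (hv : IsSchrodingerSolution Q v dv) {a : ℝ}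
    (hW : u a * dv a - du a * v a = 0) :
    ∃ c₁ c₂ : ℝ, (c₁ ≠ 0 ∨ c₂ ≠ 0) ∧ ∀ x, c₁ * u x + c₂ * v x = 0 := by
  obtain ⟨c, hc, hMc⟩ := (Matrix.exists_mulVec_eq_zero_iff (M := !![u a, v a; du a, dv a])).2
    (by rw [Matrix.det_fin_two_of, ← hW]; ring)
  have hc₀ : c 0 ≠ 0 ∨ c 1 ≠ 0 := by
    by_contra! h
    exact hc (by ext i; fin_cases i <;> simp [h])
  have hdata : c 0 * u a + c 1 * v a = 0 ∧ c 0 * du a + c 1 * dv a = 0 := by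
    simpa [funext_iff, Fin.forall_fin_two, Matrix.mulVec, dotProduct, Fin.sum_univ_two, mul_comm]
      using hMc
  have hy := (hu.linear_comb hv (c 0) (c 1)).eq_zero_of_eq_zero_of_deriv_eq_zero hQ
    hdata.1 hdata.2
  exact ⟨c 0, c 1, hc₀, fun x => congrFun hy x⟩

end IsSchrodingerSolution

/-- Uniqueness, up to scalars, of the solution of the Weber equation decaying
at `-∞`. -/
theorem weber_decaying_solution_unique
    (lam : ℝ)
    (u v : ℝ → ℝ) (hu : ContDiff ℝ 2 u) (hv : ContDiff ℝ 2 v)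
    (hueq : ∀ x, deriv (deriv u) x = (x ^ 2 - lam) * u x)
    (hveq : ∀ x, deriv (deriv v) x = (x ^ 2 - lam) * v x)
    (hulim : Tendsto u atBot (nhds 0))
    (hvlim : Tendsto v atBot (nhds 0)) :
    ∃ c₁ c₂ : ℝ, (c₁ ≠ 0 ∨ c₂ ≠ 0) ∧ ∀ x, c₁ * u x + c₂ * v x = 0 := by
  have su := IsSchrodingerSolution.of_contDiff (Q := fun x => x ^ 2 - lam) hu hueq
  have sv := IsSchrodingerSolution.of_contDiff (Q := fun x => x ^ 2 - lam) hv hveq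
  have hQ : ∀ x ≤ -(|lam| + 1), 0 ≤ x ^ 2 - lam := fun x hx => by
    nlinarith [le_abs_self lam, abs_nonneg lam]
  exact su.exists_linear_dependence_of_wronskian_eq_zero (by fun_prop) sv
    (su.wronskian_eq_zero_of_tendsto_atBot sv hQ hulim hvlim)
end

section
/- A solution of the Weber equation that is positive in the left forbidden region and decays at −∞ is strictly increasing there: W'(x) > 0 for all x ≤ −√λ. -/
/-!
In the forbidden region `x ≤ -√λ` the equation gives `W'' = (x² - λ) W ≥ 0`, so `W` is convex
there. If `W'(a) ≤ 0` at some `a` in the region, every secant ending at `a` has nonpositive slope,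
so `W ≥ W(a) > 0` on `(-∞, a]`, contradicting `W → 0` at `-∞`.
-/

open Filter Real Set

lemma ConvexOn.le_of_deriv_nonpos_of_le {f : ℝ → ℝ} {a y : ℝ} (hf : ConvexOn ℝ (Iic a) f)
    (hfa : DifferentiableAt ℝ f a) (hderiv : deriv f a ≤ 0) (hy : y ≤ a) : f a ≤ f y := by
  rcases hy.lt_or_eq with hlt | rfl
  · have hslope : slope f y a ≤ 0 :=
      (hf.slope_le_deriv hlt.le self_mem_Iic hlt hfa).trans hderiv
    rw [slope_def_field, div_le_iff₀ (sub_pos.2 hlt), zero_mul] at hslope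
    linarith
  · exact le_rfl

lemma ConvexOn.deriv_pos_of_tendsto_atBot {f : ℝ → ℝ} {a L : ℝ} (hf : ConvexOn ℝ (Iic a) f)
    (hfa : DifferentiableAt ℝ f a) (hlim : Tendsto f atBot (nhds L)) (hL : L < f a) :
    0 < deriv f a := by
  by_contra! hderiv
  have hle : f a ≤ L :=
    ge_of_tendsto hlim <| eventually_atBot.2
      ⟨a, fun _ hy ↦ hf.le_of_deriv_nonpos_of_le hfa hderiv hy⟩
  exact hle.not_gt hL

lemma sq_sub_nonneg_of_le_neg_sqrt {lam x : ℝ} (hx : x ≤ -√lam) : 0 ≤ x ^ 2 - lam := by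
  have := (sqrt_le_iff.1 (le_neg.1 hx)).2
  rw [neg_sq] at this
  linarith

theorem weber_increasing_left_forbidden_region_general
    (lam : ℝ)
    (W : ℝ → ℝ) (hW : ContDiff ℝ 2 W)
    (hWeq : ∀ x, deriv (deriv W) x = (x ^ 2 - lam) * W x)
    (hWpos : ∀ x ≤ -Real.sqrt lam, 0 < W x)
    (hWlim : Tendsto W atBot (nhds 0)) :
    ∀ x ≤ -Real.sqrt lam, 0 < deriv W x := by
  intro a ha
  have hdiff : Differentiable ℝ W := hW.differentiable two_ne_zero
  have hconvex : ConvexOn ℝ (Iic a) W :=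
    convexOn_of_deriv2_nonneg' (convex_Iic a) hdiff.differentiableOn
      hW.differentiable_deriv_two.differentiableOn fun x hx ↦ by
        have hx' : x ≤ -√lam := hx.trans ha
        rw [Function.iterate_succ_apply, Function.iterate_one, hWeq]
        exact mul_nonneg (sq_sub_nonneg_of_le_neg_sqrt hx') (hWpos x hx').le
  exact hconvex.deriv_pos_of_tendsto_atBot (hdiff a) hWlim (hWpos a ha)

/-- A solution of the Weber equation, positive in the left forbidden region and
decaying at `-∞`, is strictly increasing there. -/
theorem weber_increasing_left_forbidden_region
    (lam : ℝ) (hlam : 0 < lam)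
    (W : ℝ → ℝ) (hW : ContDiff ℝ 2 W)
    (hWeq : ∀ x, deriv (deriv W) x = (x ^ 2 - lam) * W x)
    (hWpos : ∀ x ≤ -Real.sqrt lam, 0 < W x)
    (hWlim : Tendsto W atBot (nhds 0)) :
    ∀ x ≤ -Real.sqrt lam, 0 < deriv W x :=
  weber_increasing_left_forbidden_region_general lam W hW hWeq hWpos hWlim
end

section
/- No critical points in the right forbidden region: under the stated hypotheses, W'(x) ≠ 0 for all x > √λ. -/
open Filter Real Set

/-! Where x² > λ the equation has a nonnegative coefficient, so `(W W')' = W'² + (x² - λ) W² ≥ 0`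
and `W W'` is monotone on `(√λ, ∞)`. A critical point `x₀ > √λ` is a zero of `W W'`, hence a
minimum of `W²` on `(√λ, ∞)`. As `W(3) > 0` and `W → -∞`, `W` vanishes somewhere beyond
`3 > √λ`, so `W(x₀) = W'(x₀) = 0`, and Grönwall's inequality for the first-order system
`(W, W')' = (W', (x² - λ) W)` forces `W = 0` on `[x₀, ∞)`, contradicting `W → -∞`. -/

section SecondOrderLinear

variable {q W : ℝ → ℝ}

theorem monotoneOn_mul_deriv_of_deriv_deriv_eq_mul {s : Set ℝ} (hs : Convex ℝ s)
    (hWd : Differentiable ℝ W) (hW'd : Differentiable ℝ (deriv W))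
    (heq : ∀ x ∈ s, deriv (deriv W) x = q x * W x) (hq : ∀ x ∈ s, 0 ≤ q x) :
    MonotoneOn (fun x => W x * deriv W x) s := by
  refine monotoneOn_of_deriv_nonneg hs (hWd.mul hW'd).continuous.continuousOn
    (hWd.mul hW'd).differentiableOn fun x hx => ?_
  have hxs := interior_subset hx
  rw [deriv_fun_mul (hWd x) (hW'd x), heq x hxs]
  nlinarith [sq_nonneg (deriv W x), mul_nonneg (hq x hxs) (sq_nonneg (W x))]

theorem isMinOn_sq_of_monotoneOn_mul_deriv {s : Set ℝ} (hs : Convex ℝ s)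
    (hWd : Differentiable ℝ W) (hmono : MonotoneOn (fun x => W x * deriv W x) s)
    {x₀ : ℝ} (hx₀ : x₀ ∈ s) (hcrit : deriv W x₀ = 0) :
    IsMinOn (fun x => W x ^ 2) s x₀ := by
  have hW2 : Differentiable ℝ fun x => W x ^ 2 := hWd.pow 2
  have hderiv (t : ℝ) : deriv (fun x => W x ^ 2) t = 2 * (W t * deriv W t) := by
    rw [deriv_fun_pow (hWd t)]
    ring
  have hzero : W x₀ * deriv W x₀ = 0 := by rw [hcrit, mul_zero]
  intro y hy
  rcases le_total x₀ y with hxy | hyx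
  · have hsub : Icc x₀ y ⊆ s := hs.ordConnected.out hx₀ hy
    refine monotoneOn_of_deriv_nonneg (convex_Icc x₀ y) hW2.continuous.continuousOn
      hW2.differentiableOn (fun t ht => ?_) (left_mem_Icc.2 hxy) (right_mem_Icc.2 hxy) hxy
    rw [interior_Icc] at ht
    have hprod := hmono hx₀ (hsub (Ioo_subset_Icc_self ht)) ht.1.le
    rw [hderiv]
    linarith
  · have hsub : Icc y x₀ ⊆ s := hs.ordConnected.out hy hx₀
    refine antitoneOn_of_deriv_nonpos (convex_Icc y x₀) hW2.continuous.continuousOn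
      hW2.differentiableOn (fun t ht => ?_) (left_mem_Icc.2 hyx) (right_mem_Icc.2 hyx) hyx
    rw [interior_Icc] at ht
    have hprod := hmono (hsub (Ioo_subset_Icc_self ht)) hx₀ ht.2.le
    rw [hderiv]
    linarith

theorem eqOn_zero_of_deriv_deriv_eq_mul (hq : Continuous q)
    (hWd : Differentiable ℝ W) (hW'd : Differentiable ℝ (deriv W))
    (heq : ∀ x, deriv (deriv W) x = q x * W x) {a : ℝ} (hWa : W a = 0)
    (hW'a : deriv W a = 0) : EqOn W 0 (Ici a) := by
  intro b hb
  obtain ⟨C, hC⟩ := isCompact_Icc.exists_bound_of_continuousOn (hq.continuousOn (s := Icc a b))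
  set K := max C 1
  have hbound : ∀ x ∈ Ico a b,
      ‖(deriv W x, q x * W x)‖ ≤ K * ‖(W x, deriv W x)‖ + 0 := by
    intro x hx
    have hqx : |q x| ≤ K := (hC x (Ico_subset_Icc_self hx)).trans (le_max_left _ _)
    simp only [Prod.norm_mk, Real.norm_eq_abs, abs_mul, add_zero]
    refine max_le ?_ ?_
    · exact (le_max_right _ _).trans (le_mul_of_one_le_left (by positivity) (le_max_right _ _))
    · gcongr
      exact le_max_left _ _
  have hgron := norm_le_gronwallBound_of_norm_deriv_right_le
    (f := fun x => (W x, deriv W x)) (δ := 0) (hWd.continuous.prodMk hW'd.continuous).continuousOn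
    (fun x _ => (((hWd x).hasDerivAt.prodMk (heq x ▸ (hW'd x).hasDerivAt)).hasDerivWithinAt))
    (by simp [hWa, hW'a]) hbound b (right_mem_Icc.2 hb)
  rw [gronwallBound_ε0_δ0] at hgron
  exact congrArg Prod.fst (norm_le_zero_iff.1 hgron)

end SecondOrderLinear

theorem weber_no_critical_point_right_forbidden_region_general
    (lam : ℝ) (hlam2 : lam < 2)
    (W : ℝ → ℝ) (hW : ContDiff ℝ 2 W)
    (hWeq : ∀ x, deriv (deriv W) x = (x ^ 2 - lam) * W x)
    (hWpos : ∀ x ≤ (3 : ℝ), 0 < W x)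
    (hWlim : Tendsto W atTop atBot) :
    ∀ x > Real.sqrt lam, deriv W x ≠ 0 := by
  intro x₀ hx₀ hcrit
  have hWd : Differentiable ℝ W := hW.differentiable (by norm_num)
  have hW'd : Differentiable ℝ (deriv W) := hW.differentiable_deriv_two
  have hsqrt : √lam < 3 := by
    rw [Real.sqrt_lt' (by norm_num)]
    linarith
  obtain ⟨z, hz, hWz⟩ := intermediate_value_Ici' hWd.continuous.continuousOn hWlim
    (show (0 : ℝ) ∈ Iic (W 3) from (hWpos 3 le_rfl).le)
  have hmin := isMinOn_sq_of_monotoneOn_mul_deriv (convex_Ioi √lam) hWd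
    (monotoneOn_mul_deriv_of_deriv_deriv_eq_mul (convex_Ioi √lam) hWd hW'd
      (fun x _ => hWeq x) fun x hx => sub_nonneg.2 (lt_sq_of_sqrt_lt hx).le)
    hx₀ hcrit
  have hWx₀ : W x₀ = 0 := by
    have hle := isMinOn_iff.1 hmin z (hsqrt.trans_le hz)
    rw [hWz] at hle
    nlinarith [sq_nonneg (W x₀)]
  have hvanish := eqOn_zero_of_deriv_deriv_eq_mul (by fun_prop) hWd hW'd hWeq hWx₀ hcrit
  obtain ⟨x, hxneg, hx⟩ := ((hWlim.eventually (eventually_lt_atBot 0)).and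
    (eventually_ge_atTop x₀)).exists
  exact hxneg.ne (hvanish hx)

/-- No critical points of the Weber function in the right forbidden region. -/
theorem weber_no_critical_point_right_forbidden_region
    (lam : ℝ) (hlam1 : 1 < lam) (hlam2 : lam < 2)
    (W : ℝ → ℝ) (hW : ContDiff ℝ 2 W)
    (hWeq : ∀ x, deriv (deriv W) x = (x ^ 2 - lam) * W x)
    (hWpos : ∀ x ≤ (3 : ℝ), 0 < W x)
    (hWlim : Tendsto W atTop atBot) :
    ∀ x > Real.sqrt lam, deriv W x ≠ 0 :=
  weber_no_critical_point_right_forbidden_region_general lam hlam2 W hW hWeq hWpos hWlim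
end

section
/- The Weber function has exactly one zero, located to the right of 3: under the stated hypotheses, there exists a unique z ∈ ℝ with W(z) = 0, and this z satisfies z > 3. -/
/-!
For `x > 3` the coefficient `x ^ 2 - lam` is positive, so `W'' = (x ^ 2 - lam) W` forbids a
positive interior maximum: there `W' = 0` and `W'' > 0`, so `W` would be a local minimum as well,
hence locally constant, contradicting `W'' > 0`. Given a zero `z > 3` and a later point `b` with
`W b < 0`, `W ≤ 0` on `[z, b]`, and a second zero `w` inside would be an interior maximum, where
`W = W' = 0`. Uniqueness for the linear system `(W, W')' = (W', (x ^ 2 - lam) W)` then forces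
`W = 0` on `[3, w]`, contradicting `W 3 > 0`.
-/

open Filter Real Set Topology

variable {W q : ℝ → ℝ} {a b : ℝ}

theorem eqOn_zero_of_eq_zero_of_deriv_eq_zero (hW : Differentiable ℝ W)
    (hW' : ∀ x, HasDerivAt (deriv W) (q x * W x) x) (hq : ContinuousOn q (Icc a b))
    (hb : W b = 0) (hb' : deriv W b = 0) : EqOn W 0 (Icc a b) := by
  obtain ⟨C, hC⟩ := isCompact_Icc.exists_bound_of_continuousOn hq
  set K : NNReal := C.toNNReal + 1
  set v : ℝ → ℝ × ℝ → ℝ × ℝ := fun t p => (p.2, q t * p.1)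
  have hv : ∀ t ∈ Ioc a b, LipschitzOnWith K (v t) univ := by
    refine fun t ht => LipschitzOnWith.of_dist_le_mul fun p _ p' _ => ?_
    have hqt : |q t| ≤ C := (Real.norm_eq_abs _).symm.trans_le (hC t (Ioc_subset_Icc_self ht))
    have hK : (K : ℝ) = max C 0 + 1 := by simp [K]
    have h₁ := le_max_left |p.1 - p'.1| |p.2 - p'.2|
    have h₂ := le_max_right |p.1 - p'.1| |p.2 - p'.2|
    simp only [v, Prod.dist_eq, Real.dist_eq, ← mul_sub, abs_mul, hK]
    refine max_le ?_ ?_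
    · nlinarith [abs_nonneg (p.2 - p'.2), le_max_right C 0]
    · nlinarith [abs_nonneg (p.1 - p'.1), abs_nonneg (q t), le_max_left C 0, le_max_right C 0]
  have hsys : ∀ t, HasDerivAt (fun t => (W t, deriv W t)) (v t (W t, deriv W t)) t :=
    fun t => (hW t).hasDerivAt.prodMk (hW' t)
  have hzero : ∀ t, HasDerivAt (fun _ => ((0 : ℝ), (0 : ℝ))) (v t (0, 0)) t := fun t =>
    (hasDerivAt_const t _).congr_deriv (by simp [v]; rfl)
  intro x hx
  have := ODE_solution_unique_of_mem_Icc_left hv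
    (HasDerivAt.continuousOn fun t _ => hsys t) (fun t _ => (hsys t).hasDerivWithinAt)
    (fun _ _ => mem_univ _) continuousOn_const (fun t _ => (hzero t).hasDerivWithinAt)
    (fun _ _ => mem_univ _) (by simp [hb, hb']) hx
  exact congrArg Prod.fst this

theorem not_isLocalMax_of_pos (hW : Differentiable ℝ W)
    (hW' : ∀ x, HasDerivAt (deriv W) (q x * W x) x) {c : ℝ} (hqc : 0 < q c) (hWc : 0 < W c) :
    ¬IsLocalMax W c := by
  intro hmax
  have hmin : IsLocalMin W c :=
    isLocalMin_of_deriv_deriv_pos (by rw [(hW' c).deriv]; positivity) hmax.deriv_eq_zero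
      (hW c).continuousAt
  have hconst : W =ᶠ[𝓝 c] fun _ => W c := by
    filter_upwards [hmax, hmin] with x h₁ h₂ using le_antisymm h₁ h₂
  have h₀ : deriv (deriv W) c = 0 := by simpa using hconst.deriv.deriv_eq
  rw [(hW' c).deriv] at h₀
  exact (mul_pos hqc hWc).ne' h₀

theorem nonpos_on_Icc_of_nonpos_of_nonpos (hW : Differentiable ℝ W)
    (hW' : ∀ x, HasDerivAt (deriv W) (q x * W x) x) (hq : ∀ x ∈ Ioo a b, 0 < q x)
    (ha : W a ≤ 0) (hb : W b ≤ 0) : ∀ x ∈ Icc a b, W x ≤ 0 := by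
  by_contra! ⟨x, hx, hWx⟩
  obtain ⟨c, hc, hmax⟩ := isCompact_Icc.exists_isMaxOn ⟨x, hx⟩ hW.continuous.continuousOn
  have hWc : 0 < W c := hWx.trans_le (hmax hx)
  have hc' : c ∈ Ioo a b :=
    ⟨hc.1.lt_of_ne (by rintro rfl; linarith), hc.2.lt_of_ne (by rintro rfl; linarith)⟩
  exact not_isLocalMax_of_pos hW hW' (hq c hc') hWc (hmax.isLocalMax (Icc_mem_nhds hc'.1 hc'.2))

theorem neg_of_lt_of_eq_zero (hW : Differentiable ℝ W)
    (hW' : ∀ x, HasDerivAt (deriv W) (q x * W x) x) (hq : Continuous q)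
    (hqpos : ∀ x, a < x → 0 < q x) (hlim : Tendsto W atTop atBot) {c : ℝ} (hca : c ≤ a)
    (hWc : W c ≠ 0) (ha : W a = 0) {x : ℝ} (hax : a < x) : W x < 0 := by
  obtain ⟨b, hxb, hb⟩ := ((eventually_gt_atTop x).and (hlim.eventually_lt_atBot 0)).exists
  have hnonpos := nonpos_on_Icc_of_nonpos_of_nonpos hW hW' (fun y hy => hqpos y hy.1) ha.le hb.le
  refine (hnonpos x ⟨hax.le, hxb.le⟩).lt_of_ne fun hx => hWc ?_
  have hmax : IsLocalMax W x :=
    Filter.mem_of_superset (Icc_mem_nhds hax hxb) fun y hy => hx ▸ hnonpos y hy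
  exact eqOn_zero_of_eq_zero_of_deriv_eq_zero hW hW' hq.continuousOn hx hmax.deriv_eq_zero
    ⟨le_rfl, hca.trans hax.le⟩

theorem weber_unique_zero_general
    (lam : ℝ) (hlam2 : lam < 2)
    (W : ℝ → ℝ) (hW : ContDiff ℝ 2 W)
    (hWeq : ∀ x, deriv (deriv W) x = (x ^ 2 - lam) * W x)
    (hWpos : ∀ x ≤ (3 : ℝ), 0 < W x)
    (hWlim : Tendsto W atTop atBot) :
    ∃ z : ℝ, W z = 0 ∧ z > 3 ∧ ∀ w : ℝ, W w = 0 → w = z := by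
  have hd : Differentiable ℝ W := hW.differentiable two_ne_zero
  have hdd : ∀ x, HasDerivAt (deriv W) ((x ^ 2 - lam) * W x) x := fun x =>
    hWeq x ▸ ((hW.iterate_deriv' 1 1).differentiable one_ne_zero x).hasDerivAt
  have hq : Continuous fun x : ℝ => x ^ 2 - lam := by fun_prop
  have hgt : ∀ z, W z = 0 → 3 < z := fun z hz => not_le.1 fun h => (hWpos z h).ne' hz
  have hneg : ∀ z, W z = 0 → ∀ x, z < x → W x < 0 := fun z hz x hzx =>
    neg_of_lt_of_eq_zero hd hdd hq (fun y hy => by nlinarith [hgt z hz]) hWlim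
      (hgt z hz).le (hWpos 3 le_rfl).ne' hz hzx
  obtain ⟨b, h3b, hb⟩ := ((eventually_gt_atTop 3).and (hWlim.eventually_lt_atBot 0)).exists
  obtain ⟨z, -, hz⟩ := intermediate_value_Icc' h3b.le hd.continuous.continuousOn
    ⟨hb.le, (hWpos 3 le_rfl).le⟩
  refine ⟨z, hz, hgt z hz, fun w hw => ?_⟩
  rcases lt_trichotomy w z with h | h | h
  · exact absurd hz (hneg w hw z h).ne
  · exact h
  · exact absurd hw (hneg z hz w h).ne

/-- The Weber function with small frequency has exactly one zero, located to the
right of `3`. -/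
theorem weber_unique_zero
    (lam : ℝ) (hlam1 : 1 < lam) (hlam2 : lam < 2)
    (W : ℝ → ℝ) (hW : ContDiff ℝ 2 W)
    (hWeq : ∀ x, deriv (deriv W) x = (x ^ 2 - lam) * W x)
    (hWpos : ∀ x ≤ (3 : ℝ), 0 < W x)
    (hWlim : Tendsto W atTop atBot) :
    ∃ z : ℝ, W z = 0 ∧ z > 3 ∧ ∀ w : ℝ, W w = 0 → w = z :=
  weber_unique_zero_general lam hlam2 W hW hWeq hWpos hWlim
end

section
/- Global structure of the Weber function with small frequency: under the stated hypotheses, there exists a unique x* ∈ ℝ with W'(x*) = 0; moreover −√λ < x* < √λ, W'(x) > 0 for all x < x*, and W'(x) < 0 for all x > x* (so W attains its global maximum at x*). -/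
/-!
Since `W'' = (x² - λ) W`, the function `W` is convex wherever it is positive and `x² ≥ λ`.
On `(-∞, -√λ]` this convexity together with `W → 0` at `-∞` forces `W' > 0`, so the first
critical point `x*` lies to the right of `-√λ`. To the right of `√λ`, a point with `W > 0` and
`W' ≥ 0` would make `W` increase forever, contradicting `W → -∞`; hence `x* < √λ`. Past `x*`
a next zero `z` of `W'` would have `W''(z) ≥ 0`: `W(z) > 0` is excluded by the previous
remark, `W(z) < 0` forces `z > 3` and then `W''(z) < 0`, and `W(z) = W'(z) = 0` forces
`W ≡ 0` by an energy estimate for `e^{Kx} (W² + W'²)`.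
-/

open Filter Set Topology

variable {f f' f'' : ℝ → ℝ}

theorem continuous_of_forall_hasDerivAt (hf : ∀ x, HasDerivAt f (f' x) x) : Continuous f :=
  continuous_iff_continuousAt.2 fun x => (hf x).continuousAt

theorem exists_gt_deriv_neg_of_tendsto_atBot (hf : ∀ x, HasDerivAt f (f' x) x)
    (htop : Tendsto f atTop atBot) (a : ℝ) : ∃ c > a, f' c < 0 := by
  obtain ⟨b, hb, hab⟩ :=
    ((htop.eventually (eventually_lt_atBot (f a))).and (eventually_gt_atTop a)).exists
  have hfc : Continuous f := continuous_of_forall_hasDerivAt hf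
  obtain ⟨c, hc, hslope⟩ := exists_hasDerivAt_eq_slope f f' hab hfc.continuousOn fun x _ => hf x
  exact ⟨c, hc.1, hslope ▸ div_neg_of_neg_of_pos (sub_neg.2 hb) (sub_pos.2 hab)⟩

theorem exists_first_zero_of_pos_of_nonpos {g : ℝ → ℝ} (hg : Continuous g) {a b : ℝ} (hab : a ≤ b)
    (ha : 0 < g a) (hb : g b ≤ 0) : ∃ z ∈ Ioc a b, g z = 0 ∧ ∀ x ∈ Ico a z, 0 < g x := by
  set S := Icc a b ∩ {x | g x ≤ 0}
  have hbdd : BddBelow S := ⟨a, fun x hx => hx.1.1⟩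
  obtain ⟨⟨haz, hzb⟩, hz⟩ : sInf S ∈ S :=
    (isClosed_Icc.inter (isClosed_le hg continuous_const)).csInf_mem ⟨b, ⟨hab, le_rfl⟩, hb⟩ hbdd
  have hpos : ∀ x ∈ Ico a (sInf S), 0 < g x := fun x hx => by
    by_contra! h
    exact hx.2.not_ge (csInf_le hbdd ⟨⟨hx.1, hx.2.le.trans hzb⟩, h⟩)
  have haz' : a < sInf S := haz.lt_of_ne fun h => (h ▸ ha).not_ge hz
  refine ⟨sInf S, ⟨haz', hzb⟩, hz.antisymm ?_, hpos⟩
  refine ge_of_tendsto (hg.continuousAt.continuousWithinAt (s := Iio (sInf S))) ?_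
  filter_upwards [Ico_mem_nhdsLT haz'] with x hx using (hpos x hx).le

theorem HasDerivAt.nonneg_of_neg_left_of_eq_zero {g : ℝ → ℝ} {d a z : ℝ} (hg : HasDerivAt g d z)
    (hz : g z = 0) (haz : a < z) (hneg : ∀ x ∈ Ico a z, g x < 0) : 0 ≤ d := by
  refine ge_of_tendsto ((hasDerivAt_iff_tendsto_slope.1 hg).mono_left (nhdsLT_le_nhdsNE z)) ?_
  filter_upwards [Ico_mem_nhdsLT haz] with x hx
  rw [slope_def_field, hz, sub_zero]
  exact div_nonneg_of_nonpos (hneg x hx).le (sub_nonpos.2 hx.2.le)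

theorem deriv_pos_of_tendsto_atBot_zero (hf : ∀ x, HasDerivAt f (f' x) x)
    (hf' : ∀ x, HasDerivAt f' (f'' x) x) {a : ℝ} (hconv : ∀ x ≤ a, 0 ≤ f'' x)
    (hbot : Tendsto f atBot (𝓝 0)) (ha : 0 < f a) : 0 < f' a := by
  by_contra! hneg
  have hf'c : Continuous f' := continuous_of_forall_hasDerivAt hf'
  have hfc : Continuous f := continuous_of_forall_hasDerivAt hf
  have hf'_mono : MonotoneOn f' (Iic a) :=
    monotoneOn_of_hasDerivWithinAt_nonneg (convex_Iic a) hf'c.continuousOn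
      (fun x _ => (hf' x).hasDerivWithinAt) fun x hx => hconv x (mem_Iic.1 (interior_subset hx))
  have hf_anti : AntitoneOn f (Iic a) :=
    antitoneOn_of_hasDerivWithinAt_nonpos (convex_Iic a) hfc.continuousOn
      (fun x _ => (hf x).hasDerivWithinAt) fun x hx =>
        (hf'_mono (interior_subset hx) self_mem_Iic (mem_Iic.1 (interior_subset hx))).trans hneg
  have : f a ≤ 0 := ge_of_tendsto hbot <| by
    filter_upwards [eventually_le_atBot a] with x hx using hf_anti hx self_mem_Iic hx
  exact this.not_gt ha

theorem pos_of_ge_of_convex_where_pos (hf : ∀ x, HasDerivAt f (f' x) x)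
    (hf' : ∀ x, HasDerivAt f' (f'' x) x) {a : ℝ} (hconv : ∀ x ≥ a, 0 < f x → 0 ≤ f'' x)
    (ha : 0 < f a) (ha' : 0 ≤ f' a) {b : ℝ} (hab : a ≤ b) : 0 < f b := by
  by_contra! hb
  have hf'c : Continuous f' := continuous_of_forall_hasDerivAt hf'
  have hfc : Continuous f := continuous_of_forall_hasDerivAt hf
  obtain ⟨z, ⟨haz, -⟩, hz, hpos⟩ := exists_first_zero_of_pos_of_nonpos hfc hab ha hb
  have hf'_mono : MonotoneOn f' (Icc a z) :=
    monotoneOn_of_hasDerivWithinAt_nonneg (convex_Icc a z) hf'c.continuousOn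
      (fun x _ => (hf' x).hasDerivWithinAt) fun x hx => by
        rw [interior_Icc] at hx
        exact hconv x hx.1.le (hpos x ⟨hx.1.le, hx.2⟩)
  have hf_mono : MonotoneOn f (Icc a z) :=
    monotoneOn_of_hasDerivWithinAt_nonneg (convex_Icc a z) hfc.continuousOn
      (fun x _ => (hf x).hasDerivWithinAt) fun x hx => by
        rw [interior_Icc] at hx
        exact ha'.trans (hf'_mono (left_mem_Icc.2 haz.le) (Ioo_subset_Icc_self hx) hx.1.le)
  have := hf_mono (left_mem_Icc.2 haz.le) (right_mem_Icc.2 haz.le) haz.le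
  linarith

theorem eq_zero_of_le_of_eq_zero_of_deriv_eq_zero {q : ℝ → ℝ} (hf : ∀ x, HasDerivAt f (f' x) x)
    (hf' : ∀ x, HasDerivAt f' (q x * f x) x) (hq : Continuous q) {x z : ℝ} (hxz : x ≤ z)
    (hz : f z = 0) (hz' : f' z = 0) : f x = 0 := by
  obtain ⟨K, hK⟩ :=
    isCompact_Icc.exists_bound_of_continuousOn (s := Icc x z) (hq.const_add 1).continuousOn
  set E : ℝ → ℝ := fun t => Real.exp (K * t) * (f t ^ 2 + f' t ^ 2)
  have hE : ∀ t, HasDerivAt E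
      (Real.exp (K * t) * (K * (f t ^ 2 + f' t ^ 2) + 2 * f t * f' t * (1 + q t))) t := by
    intro t
    refine ((((hasDerivAt_id t).const_mul K).exp).mul
      (((hf t).pow 2).add ((hf' t).pow 2))).congr_deriv ?_
    simp only [id, mul_one, Nat.cast_ofNat, Pi.add_apply, Pi.pow_apply]
    ring
  -- `|2 f f' (1 + q)| ≤ K (f² + f'²)`, so the weight `e^{Kt}` makes the energy nondecreasing.
  have hE_mono : MonotoneOn E (Icc x z) :=
    monotoneOn_of_hasDerivWithinAt_nonneg (convex_Icc x z)
      (continuous_of_forall_hasDerivAt hE).continuousOn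
      (fun t _ => (hE t).hasDerivWithinAt) fun t ht => by
        obtain ⟨hlow, hup⟩ := abs_le.1 (hK t (interior_subset ht))
        refine mul_nonneg (Real.exp_pos _).le ?_
        nlinarith [mul_nonneg (neg_le_iff_add_nonneg.1 hlow) (sq_nonneg (f t + f' t)),
          mul_nonneg (sub_nonneg.2 hup) (sq_nonneg (f t - f' t))]
  have hEx : E x ≤ 0 := by
    simpa [E, hz, hz'] using hE_mono (left_mem_Icc.2 hxz) (right_mem_Icc.2 hxz) hxz
  have : f x ^ 2 + f' x ^ 2 ≤ 0 := nonpos_of_mul_nonpos_right hEx (Real.exp_pos _)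
  nlinarith [sq_nonneg (f x), sq_nonneg (f' x)]

section Weber

variable {lam : ℝ} {W : ℝ → ℝ}

theorem weber_deriv_pos_of_le_neg_sqrt (hW : ∀ x, HasDerivAt W (deriv W x) x)
    (hW' : ∀ x, HasDerivAt (deriv W) ((x ^ 2 - lam) * W x) x) (hWpos : ∀ x ≤ (3 : ℝ), 0 < W x)
    (hWbot : Tendsto W atBot (𝓝 0)) {a : ℝ} (ha : a ≤ -√lam) : 0 < deriv W a := by
  have ha3 : a ≤ 3 := by linarith [Real.sqrt_nonneg lam]
  refine deriv_pos_of_tendsto_atBot_zero hW hW' (fun x hx => mul_nonneg ?_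
    (hWpos x (hx.trans ha3)).le) hWbot (hWpos a ha3)
  nlinarith [(Real.sqrt_le_iff.1 (show √lam ≤ -x by linarith)).2]

theorem weber_deriv_neg_of_sqrt_le_of_pos (hW : ∀ x, HasDerivAt W (deriv W x) x)
    (hW' : ∀ x, HasDerivAt (deriv W) ((x ^ 2 - lam) * W x) x) (hWtop : Tendsto W atTop atBot)
    {a : ℝ} (ha : √lam ≤ a) (hWa : 0 < W a) : deriv W a < 0 := by
  by_contra! hW'a
  have hpos : ∀ b ≥ a, 0 < W b := fun b hb =>
    pos_of_ge_of_convex_where_pos hW hW' (fun x hx hWx =>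
      mul_nonneg (sub_nonneg.2 (Real.sqrt_le_iff.1 (ha.trans hx)).2) hWx.le) hWa hW'a hb
  obtain ⟨b, hb, hab⟩ :=
    ((hWtop.eventually (eventually_le_atBot 0)).and (eventually_ge_atTop a)).exists
  exact (hpos b hab).not_ge hb

theorem weber_deriv_neg_of_gt (hlam : lam < 9) (hW : ∀ x, HasDerivAt W (deriv W x) x)
    (hW' : ∀ x, HasDerivAt (deriv W) ((x ^ 2 - lam) * W x) x) (hWpos : ∀ x ≤ (3 : ℝ), 0 < W x)
    (hWtop : Tendsto W atTop atBot) {xs : ℝ} (hxs0 : deriv W xs = 0) (hxs : xs ^ 2 < lam)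
    {y : ℝ} (hy : xs < y) : deriv W y < 0 := by
  by_contra! hy'
  have hW'c : Continuous (deriv W) := continuous_of_forall_hasDerivAt hW'
  have hW''xs : deriv (deriv W) xs < 0 := by
    rw [(hW' xs).deriv]
    exact mul_neg_of_neg_of_pos (sub_neg.2 hxs) (hWpos xs (by nlinarith))
  obtain ⟨a, hWa, hxa, hay⟩ : ∃ a, deriv W a < 0 ∧ a ∈ Ioo xs y :=
    ((deriv_neg_right_of_sign_deriv (nhdsWithin_le_nhds
      (eventually_nhdsWithin_sign_eq_of_deriv_neg hW''xs hxs0))).and (Ioo_mem_nhdsGT hy)).exists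
  obtain ⟨z, ⟨haz, -⟩, hz, hneg⟩ :=
    exists_first_zero_of_pos_of_nonpos hW'c.neg hay.le (neg_pos.2 hWa) (neg_nonpos.2 hy')
  have hz' : deriv W z = 0 := neg_eq_zero.1 hz
  have hW''z : 0 ≤ (z ^ 2 - lam) * W z :=
    (hW' z).nonneg_of_neg_left_of_eq_zero hz' haz fun x hx => neg_pos.1 (hneg x hx)
  have hz3 : W z ≤ 0 → 3 < z := fun h => lt_of_not_ge fun h3 => (hWpos z h3).not_ge h
  rcases lt_trichotomy (W z) 0 with hWz | hWz | hWz
  · exact (mul_neg_of_pos_of_neg (by nlinarith [hz3 hWz.le]) hWz).not_ge hW''z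
  · exact (hWpos 3 le_rfl).ne' (eq_zero_of_le_of_eq_zero_of_deriv_eq_zero hW hW'
      (by fun_prop) (hz3 hWz.le).le hWz hz')
  · have hsqrt : √lam ≤ |z| := by
      rw [← Real.sqrt_sq_eq_abs]
      exact Real.sqrt_le_sqrt (sub_nonneg.1 (nonneg_of_mul_nonneg_left hW''z hWz))
    have : √lam ≤ z := by
      cases abs_cases z <;> linarith [(Real.sq_lt.1 hxs).1]
    exact (weber_deriv_neg_of_sqrt_le_of_pos hW hW' hWtop this hWz).ne hz'

theorem weber_lt_sqrt_of_deriv_pos_left (hW : ∀ x, HasDerivAt W (deriv W x) x)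
    (hW' : ∀ x, HasDerivAt (deriv W) ((x ^ 2 - lam) * W x) x) (hWpos : ∀ x ≤ (3 : ℝ), 0 < W x)
    (hWtop : Tendsto W atTop atBot) {xs : ℝ} (hxs0 : deriv W xs = 0)
    (hleft : ∀ x < xs, 0 < deriv W x) : xs < √lam := by
  by_contra! hxs
  have hW_mono : MonotoneOn W (Iic xs) :=
    monotoneOn_of_hasDerivWithinAt_nonneg (convex_Iic xs)
      (continuous_of_forall_hasDerivAt hW).continuousOn
      (fun x _ => (hW x).hasDerivWithinAt) fun x hx => (hleft x (by simpa using hx)).le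
  have hWxs : 0 < W xs := by
    rcases le_or_gt xs 3 with h3 | h3
    · exact hWpos xs h3
    · exact (hWpos 3 le_rfl).trans_le (hW_mono (mem_Iic.2 h3.le) self_mem_Iic h3.le)
  exact (weber_deriv_neg_of_sqrt_le_of_pos hW hW' hWtop hxs hWxs).ne hxs0

end Weber

theorem weber_global_structure_general
    (lam : ℝ) (hlam2 : lam < 2)
    (W : ℝ → ℝ) (hW : ContDiff ℝ 2 W)
    (hWeq : ∀ x, deriv (deriv W) x = (x ^ 2 - lam) * W x)
    (hWpos : ∀ x ≤ (3 : ℝ), 0 < W x)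
    (hWbot : Tendsto W atBot (nhds 0))
    (hWtop : Tendsto W atTop atBot) :
    ∃ xs : ℝ, deriv W xs = 0 ∧
      (∀ y : ℝ, deriv W y = 0 → y = xs) ∧
      -Real.sqrt lam < xs ∧ xs < Real.sqrt lam ∧
      (∀ x < xs, 0 < deriv W x) ∧
      (∀ x > xs, deriv W x < 0) := by
  have hlam : lam < 9 := by linarith
  have hW₁ : ∀ x, HasDerivAt W (deriv W x) x :=
    fun x => (hW.differentiable (by norm_num) x).hasDerivAt
  have hW₂ : ∀ x, HasDerivAt (deriv W) ((x ^ 2 - lam) * W x) x :=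
    fun x => hWeq x ▸ (hW.differentiable_deriv_two x).hasDerivAt
  have hleft₀ : ∀ x ≤ -√lam, 0 < deriv W x :=
    fun x => weber_deriv_pos_of_le_neg_sqrt hW₁ hW₂ hWpos hWbot
  obtain ⟨c, hc, hWc⟩ := exists_gt_deriv_neg_of_tendsto_atBot hW₁ hWtop (-√lam)
  obtain ⟨xs, ⟨hxs_gt, -⟩, hxs0, hpos⟩ := exists_first_zero_of_pos_of_nonpos
    (continuous_of_forall_hasDerivAt hW₂) hc.le (hleft₀ _ le_rfl) hWc.le
  have hleft : ∀ x < xs, 0 < deriv W x := fun x hx =>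
    (le_or_gt x (-√lam)).elim (hleft₀ x) fun h => hpos x ⟨h.le, hx⟩
  have hxs_lt := weber_lt_sqrt_of_deriv_pos_left hW₁ hW₂ hWpos hWtop hxs0 hleft
  have hright : ∀ x > xs, deriv W x < 0 := fun x hx =>
    weber_deriv_neg_of_gt hlam hW₁ hW₂ hWpos hWtop hxs0 (Real.sq_lt.2 ⟨hxs_gt, hxs_lt⟩) hx
  refine ⟨xs, hxs0, fun y hy => ?_, hxs_gt, hxs_lt, hleft, hright⟩
  rcases lt_trichotomy y xs with h | h | h
  exacts [((hleft y h).ne' hy).elim, h, ((hright y h).ne hy).elim]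

/-- Global structure of the Weber function with small frequency: it has a unique
critical point `x*`, lying in `(-√λ, √λ)`, with `W' > 0` to the left of `x*` and
`W' < 0` to the right of `x*`. -/
theorem weber_global_structure
    (lam : ℝ) (hlam1 : 1 < lam) (hlam2 : lam < 2)
    (W : ℝ → ℝ) (hW : ContDiff ℝ 2 W)
    (hWeq : ∀ x, deriv (deriv W) x = (x ^ 2 - lam) * W x)
    (hWpos : ∀ x ≤ (3 : ℝ), 0 < W x)
    (hWbot : Tendsto W atBot (nhds 0))
    (hWtop : Tendsto W atTop atBot) :
    ∃ xs : ℝ, deriv W xs = 0 ∧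
      (∀ y : ℝ, deriv W y = 0 → y = xs) ∧
      -Real.sqrt lam < xs ∧ xs < Real.sqrt lam ∧
      (∀ x < xs, 0 < deriv W x) ∧
      (∀ x > xs, deriv W x < 0) :=
  weber_global_structure_general lam hlam2 W hW hWeq hWpos hWbot hWtop
end

section
/- Comparison of Prüfer angles: under the stated hypotheses, θ₁(x) ≤ θ(x) for all x ∈ [a, b]. -/
/-!
The difference `g = θ₁ - θ` satisfies `g' ≤ K |g|` with `K = sup_{[a,b]} |Q - 1|`: the right-hand
side of the Prüfer equation is `1 + (Q - 1) sin² θ`, it only decreases when `Q` is replaced by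
`Q₁ ≤ Q`, and `sin²` is 1-Lipschitz. A Grönwall-type fencing argument then propagates `g(a) ≤ 0`
to all of `[a, b]`.
-/

open Real Set

theorem abs_sin_sq_sub_sin_sq_le (u v : ℝ) : |sin u ^ 2 - sin v ^ 2| ≤ |u - v| := by
  have factor : sin u ^ 2 - sin v ^ 2 = sin (u + v) * sin (u - v) := by
    rw [sin_add, sin_sub]
    nlinarith [sin_sq_add_cos_sq u, sin_sq_add_cos_sq v]
  rw [factor, abs_mul]
  simpa using mul_le_mul (abs_sin_le_one _) abs_sin_le_abs (abs_nonneg _) zero_le_one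

theorem prufer_rhs_sub_le {q₁ q : ℝ} (hq : q₁ ≤ q) (u v : ℝ) :
    (q₁ * sin u ^ 2 + cos u ^ 2) - (q * sin v ^ 2 + cos v ^ 2) ≤ |q - 1| * |u - v| :=
  calc (q₁ * sin u ^ 2 + cos u ^ 2) - (q * sin v ^ 2 + cos v ^ 2)
      ≤ (q - 1) * (sin u ^ 2 - sin v ^ 2) := by
        nlinarith [sin_sq_add_cos_sq u, sin_sq_add_cos_sq v, sq_nonneg (sin u)]
    _ ≤ |q - 1| * |sin u ^ 2 - sin v ^ 2| := by rw [← abs_mul]; exact le_abs_self _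
    _ ≤ |q - 1| * |u - v| := mul_le_mul_of_nonneg_left (abs_sin_sq_sub_sin_sq_le u v) (abs_nonneg _)

theorem nonpos_of_hasDerivWithinAt_le_mul_abs {g g' : ℝ → ℝ} {a b K : ℝ}
    (hg : ContinuousOn g (Icc a b)) (hg' : ∀ x ∈ Ico a b, HasDerivWithinAt g (g' x) (Ici x) x)
    (bound : ∀ x ∈ Ico a b, g' x ≤ K * |g x|) (ha : g a ≤ 0) :
    ∀ x ∈ Icc a b, g x ≤ 0 := by
  intro x hx
  -- compare `g` with the strict supersolutions `ε e^{(K+1)(t-a)}` and let `ε → 0`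
  set E : ℝ → ℝ := fun t => exp ((K + 1) * (t - a))
  have hE : ∀ t, HasDerivAt E ((K + 1) * E t) t := fun t => by
    simpa [E, mul_comm] using ((hasDerivAt_id t).sub_const a).const_mul (K + 1) |>.exp
  have fence : ∀ ε > 0, g x ≤ ε * E x := fun ε hε =>
    image_le_of_deriv_right_lt_deriv_boundary' hg hg' (B := fun t => ε * E t)
      (by simpa [E] using ha.trans hε.le)
      (fun t _ => ((hE t).continuousAt.const_mul ε).continuousWithinAt)
      (fun t _ => ((hE t).const_mul ε).hasDerivWithinAt)
      (fun t ht hgt => by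
        have hB : 0 < ε * E t := mul_pos hε (exp_pos _)
        calc g' t ≤ K * |g t| := bound t ht
          _ < ε * ((K + 1) * E t) := by rw [hgt, abs_of_pos hB]; nlinarith)
      hx
  refine le_of_forall_pos_le_add fun δ hδ => ?_
  have := fence (δ / E x) (div_pos hδ (exp_pos _))
  rw [div_mul_cancel₀ δ (exp_pos _).ne'] at this
  linarith

theorem prufer_angle_comparison_general
    (a b : ℝ)
    (Q Q₁ : ℝ → ℝ) (hQ : Continuous Q)
    (hQle : ∀ x ∈ Set.Icc a b, Q₁ x ≤ Q x)
    (θ θ₁ : ℝ → ℝ)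
    (hθ : ∀ x ∈ Set.Icc a b,
      HasDerivAt θ (Q x * (Real.sin (θ x)) ^ 2 + (Real.cos (θ x)) ^ 2) x)
    (hθ₁ : ∀ x ∈ Set.Icc a b,
      HasDerivAt θ₁ (Q₁ x * (Real.sin (θ₁ x)) ^ 2 + (Real.cos (θ₁ x)) ^ 2) x)
    (hinit : θ₁ a ≤ θ a) :
    ∀ x ∈ Set.Icc a b, θ₁ x ≤ θ x := by
  obtain ⟨K, hK⟩ := isCompact_Icc.exists_bound_of_continuousOn
    ((hQ.sub continuous_const).continuousOn (s := Icc a b))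
  have hdiff : ∀ x ∈ Icc a b, HasDerivAt (fun t => θ₁ t - θ t)
      ((Q₁ x * sin (θ₁ x) ^ 2 + cos (θ₁ x) ^ 2) - (Q x * sin (θ x) ^ 2 + cos (θ x) ^ 2)) x :=
    fun x hx => (hθ₁ x hx).sub (hθ x hx)
  intro x hx
  refine sub_nonpos.1 <| nonpos_of_hasDerivWithinAt_le_mul_abs (K := K)
    (fun t ht => (hdiff t ht).continuousAt.continuousWithinAt)
    (fun t ht => (hdiff t (Ico_subset_Icc_self ht)).hasDerivWithinAt)
    (fun t ht => (prufer_rhs_sub_le (hQle t (Ico_subset_Icc_self ht)) _ _).trans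
      (by gcongr; exact hK t (Ico_subset_Icc_self ht)))
    (sub_nonpos.2 hinit) x hx

/-- Comparison of Prüfer angles: if `Q₁ ≤ Q` on `[a,b]` and `θ₁(a) ≤ θ(a)`, then
`θ₁ ≤ θ` on `[a,b]`. -/
theorem prufer_angle_comparison
    (a b : ℝ) (hab : a < b)
    (Q Q₁ : ℝ → ℝ) (hQ : Continuous Q) (hQ₁ : Continuous Q₁)
    (hQle : ∀ x ∈ Set.Icc a b, Q₁ x ≤ Q x)
    (θ θ₁ : ℝ → ℝ)
    (hθ : ∀ x ∈ Set.Icc a b,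
      HasDerivAt θ (Q x * (Real.sin (θ x)) ^ 2 + (Real.cos (θ x)) ^ 2) x)
    (hθ₁ : ∀ x ∈ Set.Icc a b,
      HasDerivAt θ₁ (Q₁ x * (Real.sin (θ₁ x)) ^ 2 + (Real.cos (θ₁ x)) ^ 2) x)
    (hinit : θ₁ a ≤ θ a) :
    ∀ x ∈ Set.Icc a b, θ₁ x ≤ θ x :=
  prufer_angle_comparison_general a b Q Q₁ hQ hQle θ θ₁ hθ hθ₁ hinit
end

section
/- The reflection-matching constant exceeds 1: under the stated hypotheses, there exists a constant c > 1 such that u(x) = c·W(−x) for all x ≥ −2. -/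
/-!
On `[-2, ∞)` the potential `t α` vanishes, so `u` and the reflection `V x = W (-x)` solve the
same equation `y'' = (x² - λ) y` there. Their Wronskian is therefore constant on that half-line,
and it tends to `0` at `+∞` because `V = u (-·)` for `x ≥ 3` while `u` and `u'` decay (`u` is
convex for `|x| ≥ 2`). Hence `u = c V` on `[-2, ∞)`, so `c = u 0 / W 0`.

On the other hand `u'' = (x² - λ + t α) u` with `t α ≥ 0` and not identically zero, so the
Wronskian of `W` and `u`, which vanishes at `-3` where `u` and `W` agree to first order, becomes
positive. Thus `u / W` strictly increases on `[-3, 0]`, from `1` to `c`.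
-/

open Filter Real Set Topology

noncomputable def wronskian (f g : ℝ → ℝ) (x : ℝ) : ℝ := f x * deriv g x - deriv f x * g x

lemma hasDerivAt_wronskian {f g : ℝ → ℝ} {p q x : ℝ} (hf : DifferentiableAt ℝ f x)
    (hg : DifferentiableAt ℝ g x) (hf' : HasDerivAt (deriv f) (p * f x) x)
    (hg' : HasDerivAt (deriv g) (q * g x) x) :
    HasDerivAt (wronskian f g) ((q - p) * f x * g x) x :=
  ((hf.hasDerivAt.mul hg').sub (hf'.mul hg.hasDerivAt)).congr_deriv (by ring)

lemma hasDerivAt_div_of_wronskian {f g : ℝ → ℝ} {x : ℝ} (hf : DifferentiableAt ℝ f x)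
    (hg : DifferentiableAt ℝ g x) (hx : f x ≠ 0) :
    HasDerivAt (fun y => g y / f y) (wronskian f g x / f x ^ 2) x :=
  (hg.hasDerivAt.div hf.hasDerivAt hx).congr_deriv (by rw [wronskian]; ring)

lemma hasDerivAt_deriv_comp_neg {f : ℝ → ℝ} {q x : ℝ}
    (hf : HasDerivAt (deriv f) (q * f (-x)) (-x)) :
    HasDerivAt (deriv fun y => f (-y)) (q * f (-x)) x := by
  have h : deriv (fun y => f (-y)) = fun y => -deriv f (-y) := funext (deriv_comp_neg f)
  rw [h]
  have := (hf.scomp x (hasDerivAt_neg x)).neg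
  simp only [neg_smul, one_smul, neg_neg] at this
  exact this

lemma deriv_eq_of_eqOn_Iic {f g : ℝ → ℝ} {a : ℝ} (hf : DifferentiableAt ℝ f a)
    (hg : DifferentiableAt ℝ g a) (hfg : EqOn f g (Iic a)) : deriv f a = deriv g a :=
  (uniqueDiffWithinAt_Iic a).eq_deriv _ hf.hasDerivAt.hasDerivWithinAt
    (hg.hasDerivAt.hasDerivWithinAt.congr hfg (hfg (le_refl a)))

lemma monotoneOn_of_hasDerivAt_nonneg {D : Set ℝ} (hD : Convex ℝ D) {f f' : ℝ → ℝ}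
    (hf : ∀ x ∈ D, HasDerivAt f (f' x) x) (hf'₀ : ∀ x ∈ interior D, 0 ≤ f' x) :
    MonotoneOn f D :=
  monotoneOn_of_hasDerivWithinAt_nonneg hD
    (fun x hx => (hf x hx).continuousAt.continuousWithinAt)
    (fun x hx => (hf x (interior_subset hx)).hasDerivWithinAt) hf'₀

lemma lt_of_hasDerivAt_nonneg_of_pos {f f' : ℝ → ℝ} {a b x₀ : ℝ}
    (hf : ∀ x ∈ Icc a b, HasDerivAt f (f' x) x) (hf'₀ : ∀ x ∈ Ioo a b, 0 ≤ f' x)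
    (hx₀ : x₀ ∈ Ioo a b) (hfx₀ : 0 < f' x₀) : f a < f b := by
  have hmono : MonotoneOn f (Icc a b) :=
    monotoneOn_of_hasDerivAt_nonneg (convex_Icc a b) hf (by rwa [interior_Icc])
  have hab : a ≤ b := (hx₀.1.trans hx₀.2).le
  refine (hmono (left_mem_Icc.2 hab) (right_mem_Icc.2 hab) hab).lt_of_ne fun hfab => hfx₀.ne' ?_
  have hconst : f =ᶠ[𝓝 x₀] fun _ => f a := by
    filter_upwards [Ioo_mem_nhds hx₀.1 hx₀.2] with y hy
    exact le_antisymm (hfab ▸ hmono ⟨hy.1.le, hy.2.le⟩ (right_mem_Icc.2 hab) hy.2.le)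
      (hmono (left_mem_Icc.2 hab) ⟨hy.1.le, hy.2.le⟩ hy.1.le)
  exact (hf x₀ (Ioo_subset_Icc_self hx₀)).unique
    ((hasDerivAt_const x₀ (f a)).congr_of_eventuallyEq hconst)

lemma eq_of_hasDerivAt_eq_zero_of_ge {f : ℝ → ℝ} {a : ℝ} (hf : ∀ x ≥ a, HasDerivAt f 0 x) :
    ∀ x ≥ a, f x = f a := fun x hx =>
  constant_of_has_deriv_right_zero (fun y hy => (hf y hy.1).continuousAt.continuousWithinAt)
    (fun y hy => (hf y hy.1).hasDerivWithinAt) x ⟨hx, le_rfl⟩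

theorem exists_eq_const_mul_of_tendsto_wronskian {f g q : ℝ → ℝ} {a : ℝ}
    (hf : Differentiable ℝ f) (hg : Differentiable ℝ g)
    (hf'' : ∀ x ≥ a, HasDerivAt (deriv f) (q x * f x) x)
    (hg'' : ∀ x ≥ a, HasDerivAt (deriv g) (q x * g x) x) (hf0 : ∀ x ≥ a, f x ≠ 0)
    (hw : Tendsto (wronskian f g) atTop (𝓝 0)) : ∃ c, ∀ x ≥ a, g x = c * f x := by
  have hconst := eq_of_hasDerivAt_eq_zero_of_ge fun x hx => by
    simpa using hasDerivAt_wronskian (hf x) (hg x) (hf'' x hx) (hg'' x hx)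
  have hwa : wronskian f g a = 0 := by
    refine tendsto_nhds_unique (tendsto_const_nhds.congr' ?_) hw
    filter_upwards [eventually_ge_atTop a] with x hx using (hconst x hx).symm
  refine ⟨g a / f a, fun x hx => (div_eq_iff (hf0 x hx)).1 ?_⟩
  refine eq_of_hasDerivAt_eq_zero_of_ge (f := fun y => g y / f y) (fun y hy => ?_) x hx
  simpa [hconst y hy, hwa] using hasDerivAt_div_of_wronskian (hf y) (hg y) (hf0 y hy)

theorem div_lt_div_of_wronskian_nonneg {f g q r : ℝ → ℝ} {a b x₀ : ℝ}
    (hf : Differentiable ℝ f) (hg : Differentiable ℝ g)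
    (hf'' : ∀ x ∈ Icc a b, HasDerivAt (deriv f) (q x * f x) x)
    (hg'' : ∀ x ∈ Icc a b, HasDerivAt (deriv g) ((q x + r x) * g x) x)
    (hf0 : ∀ x ∈ Icc a b, 0 < f x) (hg0 : ∀ x ∈ Icc a b, 0 < g x)
    (hr : ∀ x ∈ Ioo a b, 0 ≤ r x) (hx₀ : x₀ ∈ Ioo a b) (hrx₀ : 0 < r x₀)
    (hwa : 0 ≤ wronskian f g a) : g a / f a < g b / f b := by
  have hw : ∀ x ∈ Icc a b, HasDerivAt (wronskian f g) (r x * f x * g x) x := fun x hx => by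
    simpa using hasDerivAt_wronskian (hf x) (hg x) (hf'' x hx) (hg'' x hx)
  have hw_nonneg : ∀ x ∈ Ioo a b, 0 ≤ r x * f x * g x := fun x hx =>
    have hx' := Ioo_subset_Icc_self hx
    mul_nonneg (mul_nonneg (hr x hx) (hf0 x hx').le) (hg0 x hx').le
  have hwmono : MonotoneOn (wronskian f g) (Icc a b) :=
    monotoneOn_of_hasDerivAt_nonneg (convex_Icc a b) hw (by rwa [interior_Icc])
  obtain ⟨m, hx₀m, hmb⟩ := exists_between hx₀.2
  have hm : m ∈ Ioo a b := ⟨hx₀.1.trans hx₀m, hmb⟩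
  have hwm : 0 < wronskian f g m := by
    refine hwa.trans_lt (lt_of_hasDerivAt_nonneg_of_pos (f' := fun x => r x * f x * g x)
      (fun x hx => hw x ⟨hx.1, hx.2.trans hmb.le⟩) (fun x hx => hw_nonneg x ⟨hx.1, hx.2.trans hmb⟩)
      (x₀ := x₀) ⟨hx₀.1, hx₀m⟩ ?_)
    have hx₀' := Ioo_subset_Icc_self hx₀
    exact mul_pos (mul_pos hrx₀ (hf0 x₀ hx₀')) (hg0 x₀ hx₀')
  refine lt_of_hasDerivAt_nonneg_of_pos
    (fun x hx => hasDerivAt_div_of_wronskian (hf x) (hg x) (hf0 x hx).ne') (fun x hx => ?_) hm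
    (div_pos hwm (pow_pos (hf0 m (Ioo_subset_Icc_self hm)) 2))
  have hax : a ≤ x := hx.1.le
  exact div_nonneg (hwa.trans (hwmono (left_mem_Icc.2 (hax.trans hx.2.le))
    (Ioo_subset_Icc_self hx) hax)) (sq_nonneg _)

theorem tendsto_deriv_atTop_of_monotoneOn {f : ℝ → ℝ} {a : ℝ} (hf : Differentiable ℝ f)
    (hf0 : ∀ x, 0 ≤ f x) (hlim : Tendsto f atTop (𝓝 0))
    (hmono : MonotoneOn (deriv f) (Ici a)) : Tendsto (deriv f) atTop (𝓝 0) := by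
  have hslope : ∀ x y, x < y → ∃ ξ ∈ Ioo x y, deriv f ξ = (f y - f x) / (y - x) :=
    fun x y hxy => exists_deriv_eq_slope f hxy hf.continuous.continuousOn hf.differentiableOn
  have hupper : ∀ x ≥ a, deriv f x ≤ f (x + 1) := by
    intro x hx
    obtain ⟨ξ, hξ, hξeq⟩ := hslope x (x + 1) (by linarith)
    have := hmono hx (hx.trans hξ.1.le) hξ.1.le
    rw [hξeq, add_sub_cancel_left, div_one] at this
    linarith [hf0 x]
  have hlower : ∀ x ≥ a + 1, -f (x - 1) ≤ deriv f x := by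
    intro x hx
    obtain ⟨ξ, hξ, hξeq⟩ := hslope (x - 1) x (by linarith)
    have := hmono (show a ≤ ξ by linarith [hξ.1]) (show a ≤ x by linarith) hξ.2.le
    rw [hξeq, sub_sub_cancel, div_one] at this
    linarith [hf0 x]
  refine tendsto_of_tendsto_of_tendsto_of_le_of_le' ?_ ?_
    ((eventually_ge_atTop (a + 1)).mono hlower) ((eventually_ge_atTop a).mono hupper)
  · simpa [sub_eq_add_neg] using
      (hlim.comp (tendsto_atTop_add_const_right atTop (-1) tendsto_id)).neg
  · exact hlim.comp (tendsto_atTop_add_const_right atTop 1 tendsto_id)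

lemma monotoneOn_deriv_Ici_of_hasDerivAt {f q : ℝ → ℝ} {a : ℝ}
    (hf'' : ∀ x, HasDerivAt (deriv f) (q x * f x) x) (hf0 : ∀ x, 0 ≤ f x)
    (hq : ∀ x ≥ a, 0 ≤ q x) : MonotoneOn (deriv f) (Ici a) :=
  monotoneOn_of_hasDerivAt_nonneg (convex_Ici a) (fun x _ => hf'' x)
    fun x hx => mul_nonneg (hq x (interior_subset hx)) (hf0 x)

theorem tendsto_deriv_cocompact_of_hasDerivAt {f q : ℝ → ℝ} {a : ℝ} (hf : Differentiable ℝ f)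
    (hf'' : ∀ x, HasDerivAt (deriv f) (q x * f x) x) (hf0 : ∀ x, 0 ≤ f x)
    (hq : ∀ x, a ≤ |x| → 0 ≤ q x) (hlim : Tendsto f (cocompact ℝ) (𝓝 0)) :
    Tendsto (deriv f) (cocompact ℝ) (𝓝 0) := by
  rw [cocompact_eq_atBot_atTop, tendsto_sup] at hlim ⊢
  refine ⟨?_, tendsto_deriv_atTop_of_monotoneOn hf hf0 hlim.2
    (monotoneOn_deriv_Ici_of_hasDerivAt hf'' hf0 fun x hx => hq x (hx.trans (le_abs_self x)))⟩
  have hneg := tendsto_deriv_atTop_of_monotoneOn (f := fun y => f (-y)) (a := a)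
    (hf.comp differentiable_neg) (fun x => hf0 (-x)) (hlim.1.comp tendsto_neg_atTop_atBot)
    (monotoneOn_deriv_Ici_of_hasDerivAt (q := fun x => q (-x))
      (fun x => hasDerivAt_deriv_comp_neg (hf'' (-x))) (fun x => hf0 (-x))
      fun x hx => hq (-x) (by rw [abs_neg]; exact hx.trans (le_abs_self x)))
  simpa [deriv_comp_neg] using (hneg.comp tendsto_neg_atBot_atTop).neg

theorem tendsto_wronskian_comp_neg_atTop {f g : ℝ → ℝ} {a : ℝ} (hgf : EqOn g f (Iic a))
    (hlim : Tendsto f (cocompact ℝ) (𝓝 0)) (hlim' : Tendsto (deriv f) (cocompact ℝ) (𝓝 0)) :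
    Tendsto (wronskian (fun y => g (-y)) f) atTop (𝓝 0) := by
  have hneg : Tendsto (fun x : ℝ => -x) atTop (cocompact ℝ) :=
    tendsto_neg_atTop_atBot.mono_right atBot_le_cocompact
  have := ((hlim.comp hneg).mul (hlim'.mono_left atTop_le_cocompact)).add
    ((hlim'.comp hneg).mul (hlim.mono_left atTop_le_cocompact))
  rw [mul_zero, add_zero] at this
  refine this.congr' ?_
  filter_upwards [eventually_gt_atTop (-a)] with x hx
  have hfg : (fun y => f (-y)) =ᶠ[𝓝 x] fun y => g (-y) := by
    filter_upwards [Ioi_mem_nhds hx] with y hy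
    exact (hgf (show -y ≤ a by linarith [mem_Ioi.1 hy])).symm
  simp only [wronskian, ← hfg.deriv_eq, hfg.eq_of_nhds, deriv_comp_neg, Function.comp_apply]
  ring

theorem reflection_matching_constant_exceeds_one_general
    (α : ℝ → ℝ) (hαnonneg : ∀ x, 0 ≤ α x)
    (hαsupp : ∀ x, x ∉ Set.Ioo (-3 : ℝ) (-2) → α x = 0)
    (x₀ : ℝ) (hαpos : 0 < α x₀)
    (t : ℝ) (ht : 0 < t)
    (lam : ℝ) (hlam2 : lam < 2)
    (u : ℝ → ℝ) (hu : ContDiff ℝ 2 u) (hupos : ∀ x, 0 < u x)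
    (hueq : ∀ x, -deriv (deriv u) x + (x ^ 2 + t * α x) * u x = lam * u x)
    (hulim : Tendsto u (cocompact ℝ) (nhds 0))
    (W : ℝ → ℝ) (hW : ContDiff ℝ 2 W)
    (hWeq : ∀ x, deriv (deriv W) x = (x ^ 2 - lam) * W x)
    (hWu : ∀ x ≤ (-3 : ℝ), W x = u x)
    (hWpos : ∀ x ≤ (3 : ℝ), 0 < W x) :
    ∃ c : ℝ, 1 < c ∧ ∀ x ≥ (-2 : ℝ), u x = c * W (-x) := by
  have hx₀ : x₀ ∈ Ioo (-3) (-2) := by_contra fun h => hαpos.ne' (hαsupp x₀ h)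
  have hu' : Differentiable ℝ u := hu.differentiable (by norm_num)
  have hW' : Differentiable ℝ W := hW.differentiable (by norm_num)
  have hu'' : ∀ x, HasDerivAt (deriv u) ((x ^ 2 - lam + t * α x) * u x) x := fun x =>
    (hu.differentiable_deriv_two x).hasDerivAt.congr_deriv (by linarith [hueq x])
  have hW'' : ∀ x, HasDerivAt (deriv W) ((x ^ 2 - lam) * W x) x := fun x =>
    (hW.differentiable_deriv_two x).hasDerivAt.congr_deriv (hWeq x)
  have hV'' : ∀ x, HasDerivAt (deriv fun y => W (-y)) ((x ^ 2 - lam) * W (-x)) x := fun x => by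
    simpa only [neg_sq] using hasDerivAt_deriv_comp_neg (hW'' (-x))
  have hu'lim : Tendsto (deriv u) (cocompact ℝ) (𝓝 0) :=
    tendsto_deriv_cocompact_of_hasDerivAt (a := 2) hu' hu'' (fun x => (hupos x).le)
      (fun x hx => by nlinarith [sq_abs x, mul_nonneg ht.le (hαnonneg x)]) hulim
  obtain ⟨c, hc⟩ := exists_eq_const_mul_of_tendsto_wronskian
    (f := fun y => W (-y)) (a := -2) (hW'.comp differentiable_neg) hu' (fun x _ => hV'' x)
    (fun x hx => by simpa [hαsupp x fun h => by linarith [h.2]] using hu'' x)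
    (fun x hx => (hWpos _ (by linarith)).ne')
    (tendsto_wronskian_comp_neg_atTop (fun y hy => hWu y hy) hulim hu'lim)
  have hw₃ : wronskian W u (-3) = 0 := by
    rw [wronskian, hWu (-3) le_rfl, deriv_eq_of_eqOn_Iic (hW' _) (hu' _) fun y hy => hWu y hy]
    ring
  have hlt : u (-3) / W (-3) < u 0 / W 0 :=
    div_lt_div_of_wronskian_nonneg (r := fun x => t * α x) hW' hu' (fun x _ => hW'' x)
      (fun x _ => hu'' x) (fun x hx => hWpos x (by linarith [hx.2])) (fun x _ => hupos x)
      (fun x _ => mul_nonneg ht.le (hαnonneg x)) ⟨hx₀.1, hx₀.2.trans (by norm_num)⟩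
      (mul_pos ht hαpos) hw₃.ge
  refine ⟨c, ?_, hc⟩
  rwa [hWu (-3) le_rfl, div_self (hupos _).ne', hc 0 (by norm_num), neg_zero,
    mul_div_cancel_right₀ _ (hWpos 0 (by norm_num)).ne'] at hlt

/-- The reflection-matching constant exceeds 1: there exists `c > 1` with
`u(x) = c · W(-x)` for all `x ≥ -2`. -/
theorem reflection_matching_constant_exceeds_one
    (α : ℝ → ℝ) (hαc : Continuous α) (hαnonneg : ∀ x, 0 ≤ α x)
    (hαsupp : ∀ x, x ∉ Set.Ioo (-3 : ℝ) (-2) → α x = 0)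
    (x₀ : ℝ) (hαpos : 0 < α x₀)
    (t : ℝ) (ht : 0 < t)
    (lam : ℝ) (hlam1 : 1 < lam) (hlam2 : lam < 2)
    (u : ℝ → ℝ) (hu : ContDiff ℝ 2 u) (hupos : ∀ x, 0 < u x)
    (hueq : ∀ x, -deriv (deriv u) x + (x ^ 2 + t * α x) * u x = lam * u x)
    (hulim : Tendsto u (cocompact ℝ) (nhds 0))
    (W : ℝ → ℝ) (hW : ContDiff ℝ 2 W)
    (hWeq : ∀ x, deriv (deriv W) x = (x ^ 2 - lam) * W x)
    (hWu : ∀ x ≤ (-3 : ℝ), W x = u x)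
    (hWpos : ∀ x ≤ (3 : ℝ), 0 < W x)
    (hWtop : Tendsto W atTop atBot) :
    ∃ c : ℝ, 1 < c ∧ ∀ x ≥ (-2 : ℝ), u x = c * W (-x) :=
  reflection_matching_constant_exceeds_one_general α hαnonneg hαsupp x₀ hαpos t ht lam hlam2 u hu
    hupos hueq hulim W hW hWeq hWu hWpos
end

section
/- The unique critical point of the Weber function in this setting lies strictly to the left of the origin: under the stated hypotheses, every x* ∈ ℝ with W'(x*) = 0 satisfies x* < 0. -/
/-!
The function `G = (x W + W') e^{-x²/2}` is, up to sign, the Wronskian of `W` with the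
harmonic-oscillator ground state `e^{-x²/2}`, whose eigenvalue `1` lies below `λ`; hence
`G' = (1 - λ) W e^{-x²/2}`. Since `W = u` decays at `-∞`, `G → 0` there, so
`c W(c) + W'(c) < 0` at every `c` to the left of which `W` is positive. At a critical point
`x* ≥ 0` this is absurd if `W > 0` on `(-∞, x*]`. Otherwise `W` has a first zero
`z ∈ (3, x*]`, where `W'(z) < 0`; beyond `z`, `W'' = (x² - λ) W ≤ 0` as long as `W ≤ 0`,
so `W'` stays negative up to `x*`.
-/

open Filter Real Set Topology

theorem exists_mem_Ioc_eq_zero_forall_pos {f : ℝ → ℝ} {a b : ℝ} (hab : a ≤ b)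
    (hf : ContinuousOn f (Icc a b)) (ha : 0 < f a) (hb : f b ≤ 0) :
    ∃ c ∈ Ioc a b, f c = 0 ∧ ∀ x ∈ Ico a c, 0 < f x := by
  set T := Icc a b ∩ f ⁻¹' Iic 0
  have hTne : T.Nonempty := ⟨b, ⟨hab, le_rfl⟩, hb⟩
  have hTbdd : BddBelow T := ⟨a, fun x hx => hx.1.1⟩
  have hcT : sInf T ∈ T :=
    (hf.preimage_isClosed_of_isClosed isClosed_Icc isClosed_Iic).csInf_mem hTne hTbdd
  set c := sInf T
  have hpos : ∀ x ∈ Ico a c, 0 < f x := fun x hx => by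
    by_contra! h
    exact (csInf_le hTbdd ⟨⟨hx.1, hx.2.le.trans hcT.1.2⟩, h⟩).not_gt hx.2
  have hac : a < c := hcT.1.1.lt_of_ne fun h => hcT.2.not_gt (h ▸ ha)
  refine ⟨c, ⟨hac, hcT.1.2⟩, le_antisymm hcT.2 ?_, hpos⟩
  have := right_nhdsWithin_Ico_neBot hac
  have hcont : ContinuousWithinAt f (Ico a c) c :=
    (hf c hcT.1).mono (Ico_subset_Icc_self.trans (Icc_subset_Icc_right hcT.1.2))
  exact ge_of_tendsto hcont (eventually_nhdsWithin_of_forall fun x hx => (hpos x hx).le)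

theorem StrictAntiOn.lt_of_tendsto_atBot {α β : Type*} [LinearOrder α] [NoMinOrder α]
    [LinearOrder β] [TopologicalSpace β] [ClosedIciTopology β] {f : α → β} {c : α} {l : β}
    (hf : StrictAntiOn f (Iic c)) (hl : Tendsto f atBot (𝓝 l)) : f c < l := by
  have : Nonempty α := ⟨c⟩
  obtain ⟨b, hb⟩ := exists_lt c
  have hfb : f b ≤ l := ge_of_tendsto hl <| eventually_atBot.2
    ⟨b, fun x hx => hf.antitoneOn (mem_Iic.2 (hx.trans hb.le)) (mem_Iic.2 hb.le) hx⟩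
  exact (hf (mem_Iic.2 hb.le) self_mem_Iic hb).trans_le hfb

theorem deriv_neg_of_deriv_deriv_eq_mul {f q : ℝ → ℝ} {a b : ℝ} (hab : a ≤ b)
    (hfd : Differentiable ℝ f) (hf'd : Differentiable ℝ (deriv f))
    (hfq : ∀ x ∈ Icc a b, deriv (deriv f) x = q x * f x) (hq : ∀ x ∈ Icc a b, 0 ≤ q x)
    (hfa : f a ≤ 0) (hf'a : deriv f a < 0) : deriv f b < 0 := by
  by_contra! hf'b
  obtain ⟨c, hc, hf'c, hf'neg⟩ := exists_mem_Ioc_eq_zero_forall_pos hab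
    hf'd.continuous.neg.continuousOn (neg_pos.2 hf'a) (neg_nonpos.2 hf'b)
  have hca : a ∈ Icc a c := left_mem_Icc.2 hc.1.le
  have hcb : Icc a c ⊆ Icc a b := Icc_subset_Icc_right hc.2
  have hf_anti : AntitoneOn f (Icc a c) := by
    refine antitoneOn_of_deriv_nonpos (convex_Icc a c) hfd.continuous.continuousOn
      hfd.differentiableOn fun x hx => ?_
    rw [interior_Icc] at hx
    exact (neg_pos.1 (hf'neg x ⟨hx.1.le, hx.2⟩)).le
  have hf'_anti : AntitoneOn (deriv f) (Icc a c) := by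
    refine antitoneOn_of_deriv_nonpos (convex_Icc a c) hf'd.continuous.continuousOn
      hf'd.differentiableOn fun x hx => ?_
    rw [interior_Icc] at hx
    have hx' : x ∈ Icc a c := Ioo_subset_Icc_self hx
    rw [hfq x (hcb hx')]
    exact mul_nonpos_of_nonneg_of_nonpos (hq x (hcb hx')) ((hf_anti hca hx' hx'.1).trans hfa)
  have := hf'_anti hca (right_mem_Icc.2 hc.1.le) hc.1.le
  rw [Pi.neg_apply, neg_eq_zero] at hf'c
  linarith

theorem deriv_nonneg_of_monotoneOn_of_tendsto_atBot {f : ℝ → ℝ} {a b : ℝ}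
    (hfd : Differentiable ℝ f) (hf' : MonotoneOn (deriv f) (Iic a)) (hba : b ≤ a)
    (hfb : 0 < f b) (hlim : Tendsto f atBot (𝓝 0)) : 0 ≤ deriv f b := by
  by_contra! hf'b
  have hanti : AntitoneOn f (Iic b) := by
    refine antitoneOn_of_deriv_nonpos (convex_Iic b) hfd.continuous.continuousOn
      hfd.differentiableOn fun x hx => ?_
    rw [interior_Iic] at hx
    exact (hf' (mem_Iic.2 (hx.le.trans hba)) (mem_Iic.2 hba) hx.le).trans hf'b.le
  have : f b ≤ 0 := ge_of_tendsto hlim <| eventually_atBot.2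
    ⟨b, fun x hx => hanti (mem_Iic.2 hx) self_mem_Iic hx⟩
  linarith

theorem tendsto_pow_mul_exp_neg_sq_div_two_atBot (n : ℕ) :
    Tendsto (fun x : ℝ => x ^ n * exp (-(x ^ 2 / 2))) atBot (𝓝 0) := by
  rw [tendsto_zero_iff_norm_tendsto_zero]
  refine ((tendsto_rpow_abs_mul_exp_neg_mul_sq_cocompact one_half_pos n).mono_left
    atBot_le_cocompact).congr fun x => ?_
  rw [norm_mul, norm_pow, Real.norm_eq_abs, Real.norm_of_nonneg (exp_pos _).le, rpow_natCast]
  ring_nf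

noncomputable def gaussWronskian (W : ℝ → ℝ) (x : ℝ) : ℝ :=
  (x * W x + deriv W x) * exp (-(x ^ 2 / 2))

section Weber

variable {W : ℝ → ℝ} {lam : ℝ}

theorem hasDerivAt_gaussWronskian {x : ℝ} (hWd : Differentiable ℝ W)
    (hW'd : Differentiable ℝ (deriv W)) (hWeq : deriv (deriv W) x = (x ^ 2 - lam) * W x) :
    HasDerivAt (gaussWronskian W) ((1 - lam) * (W x * exp (-(x ^ 2 / 2)))) x := by
  have hE : HasDerivAt (fun y : ℝ => exp (-(y ^ 2 / 2))) (-x * exp (-(x ^ 2 / 2))) x := by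
    have h : HasDerivAt (fun y : ℝ => -(y ^ 2 / 2)) (-(2 * x ^ 1 / 2)) x :=
      ((hasDerivAt_pow 2 x).div_const 2).neg
    convert h.exp using 1
    ring
  have hW' := hW'd x |>.hasDerivAt
  rw [hWeq] at hW'
  exact ((((hasDerivAt_id' x).mul (hWd x).hasDerivAt).add hW').mul hE).congr_deriv
    (by simp only [Pi.add_apply, Pi.mul_apply]; ring)

theorem gaussWronskian_strictAntiOn (hWd : Differentiable ℝ W)
    (hW'd : Differentiable ℝ (deriv W)) (hWeq : ∀ x, deriv (deriv W) x = (x ^ 2 - lam) * W x)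
    (hlam : 1 < lam) {c : ℝ} (hpos : ∀ x < c, 0 < W x) :
    StrictAntiOn (gaussWronskian W) (Iic c) := by
  have hG x := hasDerivAt_gaussWronskian (x := x) hWd hW'd (hWeq x)
  refine strictAntiOn_of_deriv_neg (convex_Iic c)
    (fun x _ => (hG x).continuousAt.continuousWithinAt) fun x hx => ?_
  rw [interior_Iic] at hx
  rw [(hG x).deriv]
  exact mul_neg_of_neg_of_pos (by linarith) (mul_pos (hpos x hx) (exp_pos _))

theorem tendsto_gaussWronskian_atBot (hWd : Differentiable ℝ W)
    (hW'd : Differentiable ℝ (deriv W)) (hWeq : ∀ x, deriv (deriv W) x = (x ^ 2 - lam) * W x)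
    {a : ℝ} (ha : a ≤ 0) (hlam : lam ≤ a ^ 2) (hpos : ∀ x ≤ a, 0 < W x)
    (hlim : Tendsto W atBot (𝓝 0)) : Tendsto (gaussWronskian W) atBot (𝓝 0) := by
  have hmono : MonotoneOn (deriv W) (Iic a) := by
    refine monotoneOn_of_deriv_nonneg (convex_Iic a) hW'd.continuous.continuousOn
      hW'd.differentiableOn fun x hx => ?_
    rw [interior_Iic] at hx
    rw [hWeq x]
    have : a ^ 2 ≤ x ^ 2 := by nlinarith [mem_Iio.1 hx]
    exact mul_nonneg (by linarith) (hpos x hx.le).le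
  have hbdd : IsBoundedUnder (· ≤ ·) atBot (norm ∘ deriv W) := by
    refine isBoundedUnder_of_eventually_le (a := deriv W a)
      (eventually_atBot.2 ⟨a, fun x hx => ?_⟩)
    rw [Function.comp_apply, Real.norm_of_nonneg
      (deriv_nonneg_of_monotoneOn_of_tendsto_atBot hWd hmono hx (hpos x hx) hlim)]
    exact hmono hx self_mem_Iic hx
  have h := (hlim.mul (tendsto_pow_mul_exp_neg_sq_div_two_atBot 1)).add
    (isBoundedUnder_le_mul_tendsto_zero hbdd (tendsto_pow_mul_exp_neg_sq_div_two_atBot 0))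
  simp only [pow_one, pow_zero, one_mul, mul_zero, add_zero] at h
  refine h.congr fun x => ?_
  simp only [gaussWronskian]
  ring

end Weber

theorem weber_critical_point_negative_general
    (lam : ℝ) (hlam1 : 1 < lam) (hlam2 : lam < 2)
    (u : ℝ → ℝ)
    (hulim : Tendsto u (cocompact ℝ) (nhds 0))
    (W : ℝ → ℝ) (hW : ContDiff ℝ 2 W)
    (hWeq : ∀ x, deriv (deriv W) x = (x ^ 2 - lam) * W x)
    (hWu : ∀ x ≤ (-3 : ℝ), W x = u x)
    (hWpos : ∀ x ≤ (3 : ℝ), 0 < W x) :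
    ∀ xs : ℝ, deriv W xs = 0 → xs < 0 := by
  have hWd : Differentiable ℝ W := hW.differentiable two_ne_zero
  have hW'd : Differentiable ℝ (deriv W) := hW.differentiable_deriv_two
  have hWlim : Tendsto W atBot (𝓝 0) := (hulim.mono_left atBot_le_cocompact).congr'
    (eventually_atBot.2 ⟨-3, fun x hx => (hWu x hx).symm⟩)
  have hG : Tendsto (gaussWronskian W) atBot (𝓝 0) :=
    tendsto_gaussWronskian_atBot (a := -3) hWd hW'd hWeq (by norm_num) (by linarith)
      (fun x hx => hWpos x (by linarith)) hWlim
  have hpos_left (c : ℝ) (hc : ∀ x ∈ Ico 3 c, 0 < W x) (x : ℝ) (hx : x < c) : 0 < W x :=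
    if h : x ≤ 3 then hWpos x h else hc x ⟨(not_le.1 h).le, hx⟩
  have hneg (c : ℝ) (hc : ∀ x ∈ Ico 3 c, 0 < W x) : c * W c + deriv W c < 0 :=
    neg_of_mul_neg_left ((gaussWronskian_strictAntiOn hWd hW'd hWeq hlam1
      (hpos_left c hc)).lt_of_tendsto_atBot hG) (exp_pos _).le
  intro xs hxs
  by_contra! hxs0
  by_cases hWxs : ∀ y ∈ Icc 3 xs, 0 < W y
  · have h := hneg xs fun x hx => hWxs x (Ico_subset_Icc_self hx)
    have : 0 < W xs := if h : xs ≤ 3 then hWpos xs h else hWxs xs ⟨(not_le.1 h).le, le_rfl⟩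
    rw [hxs] at h
    nlinarith
  · push Not at hWxs
    obtain ⟨y, hy, hWy⟩ := hWxs
    obtain ⟨z, hz, hWz, hWz_pos⟩ :=
      exists_mem_Ioc_eq_zero_forall_pos hy.1 hWd.continuous.continuousOn (hWpos 3 le_rfl) hWy
    have hW'z : deriv W z < 0 := by simpa [hWz] using hneg z hWz_pos
    exact (deriv_neg_of_deriv_deriv_eq_mul (hz.2.trans hy.2) hWd hW'd (fun x _ => hWeq x)
      (fun x hx => by nlinarith [hz.1, hx.1]) hWz.le hW'z).ne hxs

/-- The unique critical point of the Weber function in this setting lies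
strictly to the left of the origin. -/
theorem weber_critical_point_negative
    (α : ℝ → ℝ) (hαc : Continuous α) (hαnonneg : ∀ x, 0 ≤ α x)
    (hαsupp : ∀ x, x ∉ Set.Ioo (-3 : ℝ) (-2) → α x = 0)
    (x₀ : ℝ) (hαpos : 0 < α x₀)
    (t : ℝ) (ht : 0 < t)
    (lam : ℝ) (hlam1 : 1 < lam) (hlam2 : lam < 2)
    (u : ℝ → ℝ) (hu : ContDiff ℝ 2 u) (hupos : ∀ x, 0 < u x)
    (hueq : ∀ x, -deriv (deriv u) x + (x ^ 2 + t * α x) * u x = lam * u x)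
    (hulim : Tendsto u (cocompact ℝ) (nhds 0))
    (W : ℝ → ℝ) (hW : ContDiff ℝ 2 W)
    (hWeq : ∀ x, deriv (deriv W) x = (x ^ 2 - lam) * W x)
    (hWu : ∀ x ≤ (-3 : ℝ), W x = u x)
    (hWpos : ∀ x ≤ (3 : ℝ), 0 < W x)
    (hWtop : Tendsto W atTop atBot) :
    ∀ xs : ℝ, deriv W xs = 0 → xs < 0 :=
  weber_critical_point_negative_general lam hlam1 hlam2 u hulim W hW hWeq hWu hWpos
end
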